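/- arXiv:1711.07061 — 5 statements merged into one kernel-verified Lean document; each statement's English description precedes it below -/
import Mathlib

section
/- Let N ≥ 1 and L ≥ 1 be integers and let ω₁,…,ω_N be real numbers. Then det( (i+L−1)! · e^{ω_j} · L_{i+L−1}(−ω_j) )_{i,j=1}^N = Δ(ω₁,…,ω_N) · ∏_{i=1}^N e^{ω_i} · Ñ_L / ( L! · ∏_{j=1}^{L−1} (j!)² ). (This is the paper's relation 𝒩_L = (−1)^{N(N−1)} N! Δ(ω) ∏ e^{ω_i} Ñ_L/(L! ∏_{j=1}^{L−1}(j!)²) between the normalization 𝒩_L = N!·det G, with G_{ij} = (i+L−1)! e^{ω_j} L_{i+L−1}(−ω_j), and the multiple-integral normalization Ñ_L.) -/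
open MeasureTheory Finset Matrix

/-- The entire function `₀F₁(1;x) = ∑ xⁿ/(n!)²` (real argument). -/
noncomputable def f01 (x : ℝ) : ℝ := ∑' n : ℕ, x ^ n / ((n.factorial : ℝ)) ^ 2

/-- The entire function `₀F₁(1;x) = ∑ xⁿ/(n!)²` (complex argument). -/
noncomputable def f01C (x : ℂ) : ℂ := ∑' n : ℕ, x ^ n / ((n.factorial : ℂ)) ^ 2

/-- Vandermonde product `Δ(x₁,…,x_m) = ∏_{i<j} (x_j − x_i)`. -/
noncomputable def vand {m : ℕ} (x : Fin m → ℝ) : ℝ :=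
  ∏ p ∈ Finset.univ.filter (fun p : Fin m × Fin m => p.1 < p.2), (x p.2 - x p.1)

/-- The nonnegative orthant `[0,∞)^m`. -/
def orth (m : ℕ) : Set (Fin m → ℝ) := Set.univ.pi fun _ => Set.Ici (0 : ℝ)

/-- The joint density `Δ(x)·det(₀F₁(1;ω_k x_j))·∏ x_i^L e^{−x_i}` of the squared
singular values. -/
noncomputable def dens (N L : ℕ) (ω : Fin N → ℝ) (x : Fin N → ℝ) : ℝ :=
  vand x * Matrix.det (Matrix.of fun k j : Fin N => f01 (ω k * x j)) *
    ∏ i, (x i ^ L * Real.exp (-x i))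

/-- The matrix weight `w(X) = exp(−Tr(XX*)+Tr(ΩX)+Tr(X*Ω*))·det(X*X)^L`
(complex-valued; its value is in fact real). -/
noncomputable def W (N L : ℕ) (Ω X : Matrix (Fin N) (Fin N) ℂ) : ℂ :=
  Complex.exp (-Matrix.trace (X * Xᴴ) + Matrix.trace (Ω * X) + Matrix.trace (Xᴴ * Ωᴴ)) *
    Matrix.det (Xᴴ * X) ^ L

/-- Matrix-model average `⟨h⟩ = (∫ h(X) w(X) dX)/(∫ w(X) dX)`, the integrals being
over Lebesgue measure on the 2N² real coordinates of X. -/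
noncomputable def mavg (N L : ℕ) (Ω : Matrix (Fin N) (Fin N) ℂ)
    (h : Matrix (Fin N) (Fin N) ℂ → ℂ) : ℂ :=
  (∫ X : Fin N → Fin N → ℂ, h (Matrix.of X) * W N L Ω (Matrix.of X)) /
    ∫ X : Fin N → Fin N → ℂ, W N L Ω (Matrix.of X)

/-- Eigenvalue-ensemble average `E_{ω,L}[g]` with respect to the density `dens`. -/
noncomputable def Eavg (N L : ℕ) (ω : Fin N → ℝ) (g : (Fin N → ℝ) → ℂ) : ℂ :=
  (∫ x in orth N, g x * (dens N L ω x : ℂ)) /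
    ((∫ x in orth N, dens N L ω x : ℝ) : ℂ)

/-- The normalization `Ñ_L = ∫_{[0,∞)^L} ∏_{i,j}(t_i+ω_j)·Δ(t)²·∏ e^{−t_i} dt`. -/
noncomputable def Ntilde (N L : ℕ) (ω : Fin N → ℝ) : ℝ :=
  ∫ t in orth L, (∏ i, ∏ j, (t i + ω j)) * vand t ^ 2 * ∏ i, Real.exp (-(t i))

/-- The degenerate normalization `Ñ_L(ρ) = ∫_{[0,∞)^L} ∏ (t_i+ρ)^N·Δ(t)²·∏ e^{−t_i} dt`. -/
noncomputable def NtildeDeg (N L : ℕ) (ρ : ℝ) : ℝ :=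
  ∫ t in orth L, (∏ i, (t i + ρ) ^ N) * vand t ^ 2 * ∏ i, Real.exp (-(t i))

/-- The Laguerre polynomial `L_n(x) = ∑_{k=0}^n (n choose k)(−x)^k/k!`. -/
noncomputable def laguerre (n : ℕ) (x : ℝ) : ℝ :=
  ∑ k ∈ Finset.range (n + 1), (n.choose k : ℝ) * (-x) ^ k / (k.factorial : ℝ)

/-- The monic Laguerre polynomial `π_n(x) = (−1)^n n! L_n(x)`. -/
noncomputable def piL (n : ℕ) (x : ℝ) : ℝ := (-1 : ℝ) ^ n * (n.factorial : ℝ) * laguerre n x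

/-- The Bessel function `J_k(x) = ∑_m (−1)^m (x/2)^{2m+k}/(m!(m+k)!)`. -/
noncomputable def besselJ (k : ℕ) (x : ℝ) : ℝ :=
  ∑' m : ℕ, (-1 : ℝ) ^ m * (x / 2) ^ (2 * m + k) / ((m.factorial : ℝ) * ((m + k).factorial : ℝ))

/-- The moment matrix `G_{i,j} = (i−1)!·e^{ω_j}·L_{i−1}(−ω_j)` (0-based indices). -/
noncomputable def Gmat (N : ℕ) (ω : Fin N → ℝ) : Matrix (Fin N) (Fin N) ℝ :=
  Matrix.of fun i j => ((i : ℕ).factorial : ℝ) * Real.exp (ω j) * laguerre (i : ℕ) (-ω j)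

/-!
Up to sign, `Δ(−ω) · ∏ (t_i + ω_j) · Δ(t)² = Δ(t) · Δ(t, −ω)`. Write `Δ(t, −ω)` as the determinant
of the monic Laguerre polynomials `π_k = (−1)^k k! L_k` at the points `t, −ω`, and expand `Δ(t)`
by the Leibniz formula into monomials `∏ t_i ^ τ(i)`. Each `t_i` then occurs in a single row, so the
integral over `[0,∞)^L` can be taken row by row. As `∫₀^∞ t^a π_b(t) e^{-t} dt` vanishes for
`a < b` and equals `(b!)²` for `a = b`, the integrated matrix is block triangular and every `τ`
contributes `∏_{j<L} (j!)² · det (π_{L+i}(−ω_j))`; this determinant is the left-hand side up to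
the factors `±e^{ω_j}`.
-/

lemma integrableOn_pow_mul_exp_neg (n : ℕ) :
    IntegrableOn (fun x : ℝ => x ^ n * Real.exp (-x)) (Set.Ici 0) := by
  rw [integrableOn_Ici_iff_integrableOn_Ioi]
  refine (Real.GammaIntegral_convergent (s := n + 1) (by positivity)).congr_fun
    (fun x _ => ?_) measurableSet_Ioi
  simp [Real.rpow_natCast, mul_comm]

lemma integral_pow_mul_exp_neg (n : ℕ) :
    ∫ x in Set.Ici (0 : ℝ), x ^ n * Real.exp (-x) = n.factorial := by
  rw [integral_Ici_eq_integral_Ioi, ← Real.Gamma_nat_eq_factorial,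
    Real.Gamma_eq_integral (by positivity)]
  refine setIntegral_congr_fun measurableSet_Ioi (fun x _ => ?_)
  simp [Real.rpow_natCast, mul_comm]

noncomputable def piLCoeff (n k : ℕ) : ℝ :=
  (-1) ^ (n - k) * n.choose k * (n.factorial / k.factorial)

lemma piLCoeff_self (n : ℕ) : piLCoeff n n = 1 := by
  simp [piLCoeff, Nat.factorial_ne_zero]

lemma piL_eq_sum (n : ℕ) (x : ℝ) :
    piL n x = ∑ k ∈ range (n + 1), piLCoeff n k * x ^ k := by
  rw [piL, laguerre, mul_sum]
  refine sum_congr rfl fun k hk => ?_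
  have hsign : (-1 : ℝ) ^ n = (-1) ^ (n - k) * (-1) ^ k := by
    rw [← pow_add, Nat.sub_add_cancel (Nat.lt_succ_iff.mp (mem_range.mp hk))]
  have hsq : (-1 : ℝ) ^ k * (-1) ^ k = 1 := by rw [← mul_pow]; norm_num
  rw [piLCoeff, neg_pow x, hsign]
  linear_combination (-1 : ℝ) ^ (n - k) * n.choose k * n.factorial / k.factorial * x ^ k * hsq

lemma pow_mul_exp_neg_mul_piL (a c : ℕ) (x : ℝ) :
    x ^ a * Real.exp (-x) * piL c x =
      ∑ k ∈ range (c + 1), piLCoeff c k * (x ^ (a + k) * Real.exp (-x)) := by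
  rw [piL_eq_sum, mul_sum]
  refine sum_congr rfl fun k _ => ?_
  ring

lemma integrableOn_pow_mul_exp_neg_mul_piL (a c : ℕ) :
    IntegrableOn (fun x : ℝ => x ^ a * Real.exp (-x) * piL c x) (Set.Ici 0) := by
  simp_rw [pow_mul_exp_neg_mul_piL]
  exact integrable_finsetSum _ fun k _ => (integrableOn_pow_mul_exp_neg _).const_mul _

noncomputable def piLMoment (a c : ℕ) : ℝ :=
  ∫ x in Set.Ici (0 : ℝ), x ^ a * Real.exp (-x) * piL c x

/-- `∫ x^(a+k) e^{-x} dx = (a+k)! = k! · (k+1)⋯(k+a)`, and the `k!` cancels against the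
coefficients of `π_c`, leaving the alternating binomial sum of a `c`-th finite difference. -/
lemma piLMoment_eq_fwdDiff (a c : ℕ) :
    piLMoment a c = c.factorial * (fwdDiff 1)^[c] (ascPochhammer ℝ a).eval 1 := by
  simp_rw [piLMoment, pow_mul_exp_neg_mul_piL]
  rw [integral_finsetSum _ fun k _ => (integrableOn_pow_mul_exp_neg _).const_mul _,
    fwdDiff_iter_eq_sum_shift, mul_sum]
  refine sum_congr rfl fun k _ => ?_
  have hasc : ((a + k).factorial : ℝ) = k.factorial * (k + 1).ascFactorial a := by
    rw [add_comm, ← Nat.factorial_mul_ascFactorial]; push_cast; ring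
  rw [integral_const_mul, integral_pow_mul_exp_neg, hasc, nsmul_eq_mul, mul_one, add_comm (1 : ℝ),
    ← Nat.cast_add_one, ascPochhammer_nat_eq_natCast_ascFactorial, piLCoeff, zsmul_eq_mul]
  push_cast
  field_simp [Nat.factorial_ne_zero]

lemma piLMoment_of_le {a c : ℕ} (h : a ≤ c) :
    piLMoment a c = if a = c then (c.factorial : ℝ) ^ 2 else 0 := by
  rw [piLMoment_eq_fwdDiff]
  split_ifs with hac
  · subst hac
    have := (ascPochhammer ℝ a).fwdDiff_iter_degree_eq_factorial
    rw [ascPochhammer_natDegree, (monic_ascPochhammer ℝ a).leadingCoeff] at this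
    simp [this, sq]
  · rw [Polynomial.fwdDiff_iter_eq_zero_of_degree_lt (by rw [ascPochhammer_natDegree]; omega)]
    simp

section MonicLaguerre

open Polynomial

noncomputable def piLPoly (n : ℕ) : ℝ[X] :=
  X ^ n + ∑ k : Fin n, C (piLCoeff n k) * X ^ (k : ℕ)

lemma piLPoly_monic (n : ℕ) : (piLPoly n).Monic :=
  monic_X_pow_add (degree_sum_fin_lt _)

lemma piLPoly_natDegree (n : ℕ) : (piLPoly n).natDegree = n := by
  rw [piLPoly, natDegree_add_eq_left_of_degree_lt, natDegree_X_pow]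
  rw [degree_X_pow]
  exact degree_sum_fin_lt _

lemma eval_piLPoly (n : ℕ) (x : ℝ) : (piLPoly n).eval x = piL n x := by
  rw [piL_eq_sum, sum_range_succ, piLCoeff_self, piLPoly, eval_add, eval_finsetSum,
    ← Fin.sum_univ_eq_sum_range (fun k => piLCoeff n k * x ^ k)]
  simp [add_comm]

end MonicLaguerre

lemma vand_eq_det_vandermonde {m : ℕ} (x : Fin m → ℝ) : vand x = det (vandermonde x) := by
  rw [det_vandermonde, vand, prod_finset_product _ univ (fun i => Ioi i) (by simp)]

lemma vand_eq_det_piL {m : ℕ} (x : Fin m → ℝ) :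
    vand x = det (of fun i j : Fin m => piL j (x i)) := by
  rw [vand_eq_det_vandermonde, det_eval_matrixOfPolynomials_eq_det_vandermonde x
    (fun j => piLPoly j) (fun j => piLPoly_natDegree j) (fun j => piLPoly_monic j)]
  simp only [eval_piLPoly]

lemma vand_eq_sum_perm {m : ℕ} (t : Fin m → ℝ) :
    vand t = ∑ τ : Equiv.Perm (Fin m), ((Equiv.Perm.sign τ : ℤ) : ℝ) * ∏ i, t i ^ (τ i : ℕ) := by
  rw [vand_eq_det_vandermonde, ← det_transpose, det_apply']
  rfl

lemma vand_neg {m : ℕ} (x : Fin m → ℝ) : vand (-x) = (∏ j : Fin m, (-1) ^ (j : ℕ)) * vand x := by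
  rw [vand_eq_det_vandermonde, vand_eq_det_vandermonde, ← det_mul_row]
  congr 1
  ext i j
  rw [of_apply, vandermonde_apply, vandermonde_apply, Pi.neg_apply, neg_pow]

lemma vand_eq_prod_ite {m : ℕ} (x : Fin m → ℝ) :
    vand x = ∏ i, ∏ j, if i < j then x j - x i else 1 := by
  rw [vand, prod_filter, ← univ_product_univ, prod_product]

lemma vand_append {L N : ℕ} (t : Fin L → ℝ) (y : Fin N → ℝ) :
    vand (Fin.append t y) = vand t * vand y * ∏ i, ∏ j, (y j - t i) := by
  have hcc (i j : Fin L) : Fin.castAdd N i < Fin.castAdd N j ↔ i < j := Iff.rfl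
  have hcn (i : Fin L) (j : Fin N) : Fin.castAdd N i < Fin.natAdd L j := by
    simp [Fin.lt_def]; omega
  have hnc (i : Fin N) (j : Fin L) : ¬ Fin.natAdd L i < Fin.castAdd N j := by
    simp [Fin.lt_def]; omega
  simp only [vand_eq_prod_ite, Fin.prod_univ_add, Fin.append_left, Fin.append_right, hcc, hcn, hnc,
    Fin.natAdd_lt_natAdd_iff, if_true, if_false, prod_const_one, mul_one, prod_mul_distrib]
  ring

section RowIntegration

variable {m k α 𝕜 : Type*} [Fintype m] [DecidableEq m] [Fintype k] [DecidableEq k]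

lemma det_fromRows_eq_sum {R : Type*} [CommRing R] (A : Matrix m (m ⊕ k) R)
    (B : Matrix k (m ⊕ k) R) :
    det (fromRows A B) = ∑ σ : Equiv.Perm (m ⊕ k),
      ((Equiv.Perm.sign σ : ℤ) : R) * (∏ j, B j (σ (.inr j))) * ∏ i, A i (σ (.inl i)) := by
  rw [← det_transpose, det_apply']
  refine sum_congr rfl fun σ _ => ?_
  rw [Fintype.prod_sum_type]
  simp only [transpose_apply, fromRows_apply_inl, fromRows_apply_inr]
  ring

lemma det_fromRows_mul_left {R : Type*} [CommRing R] (g : m → R) (A : m → m ⊕ k → R)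
    (B : Matrix k (m ⊕ k) R) :
    det (fromRows (of fun i c => g i * A i c) B) = (∏ i, g i) * det (fromRows (of A) B) := by
  have h := det_mul_column (Sum.elim g 1) (fromRows (of A) B)
  rw [Fintype.prod_sum_type] at h
  simp only [Sum.elim_inl, Sum.elim_inr, Pi.one_apply, prod_const_one, mul_one] at h
  rw [← h]
  congr 1
  ext (i | j) c <;> simp

variable [RCLike 𝕜] [MeasurableSpace α] (μ : Measure α) [SigmaFinite μ]

lemma integrable_det_fromRows (F : m → α → m ⊕ k → 𝕜) (B : Matrix k (m ⊕ k) 𝕜)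
    (hF : ∀ i c, Integrable (fun x => F i x c) μ) :
    Integrable (fun t : m → α => det (fromRows (of fun i => F i (t i)) B))
      (Measure.pi fun _ => μ) := by
  simp_rw [det_fromRows_eq_sum]
  exact integrable_finsetSum _ fun σ _ =>
    (Integrable.fintype_prod fun i => hF i (σ (.inl i))).const_mul _

lemma integral_det_fromRows (F : m → α → m ⊕ k → 𝕜) (B : Matrix k (m ⊕ k) 𝕜)
    (hF : ∀ i c, Integrable (fun x => F i x c) μ) :
    ∫ t, det (fromRows (of fun i => F i (t i)) B) ∂(Measure.pi fun _ => μ) =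
      det (fromRows (of fun i c => ∫ x, F i x c ∂μ) B) := by
  simp_rw [det_fromRows_eq_sum]
  rw [integral_finsetSum _ fun σ _ =>
    (Integrable.fintype_prod fun i => hF i (σ (.inl i))).const_mul _]
  refine sum_congr rfl fun σ _ => ?_
  simp only [of_apply]
  rw [integral_const_mul, integral_fintype_prod_eq_prod (fun i x => F i x (σ (.inl i)))]

end RowIntegration

section KeyIntegral

variable {L N : ℕ}

lemma vand_append_eq_det_fromRows (t : Fin L → ℝ) (y : Fin N → ℝ) :
    vand (Fin.append t y) = det (fromRows (of fun i c => piL (finSumFinEquiv c) (t i))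
      (of fun j c => piL (finSumFinEquiv c) (y j))) := by
  rw [vand_eq_det_piL, ← det_submatrix_equiv_self finSumFinEquiv]
  congr 1
  ext (i | j) c <;> simp

lemma det_piLMoment_fromRows (τ : Equiv.Perm (Fin L)) (y : Fin N → ℝ) :
    det (fromRows (of fun i c => piLMoment (τ i) (finSumFinEquiv c))
      (of fun j c => piL (finSumFinEquiv c) (y j))) =
      (Equiv.Perm.sign τ : ℝ) * (∏ a : Fin L, (a.val.factorial : ℝ) ^ 2) *
        det (of fun a j : Fin N => piL (L + a) (y j)) := by
  have hblocks : fromRows (of fun i c => piLMoment (τ i) (finSumFinEquiv c))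
      (of fun j c => piL (finSumFinEquiv c) (y j)) =
      fromBlocks ((of fun a b : Fin L => piLMoment a b).submatrix τ id) 0
        (of fun j b => piL b (y j)) (of fun a j : Fin N => piL (L + a) (y j))ᵀ := by
    ext (i | j) (b | b)
    · simp
    · simp [piLMoment_of_le (show (τ i : ℕ) ≤ L + b by omega), show (τ i : ℕ) ≠ L + b by omega]
    · simp
    · simp
  have htri : (of fun a b : Fin L => piLMoment a b).IsLowerTriangular := fun a b hab => by
    have hab' : (a : ℕ) < b := OrderDual.toDual_lt_toDual.mp hab
    rw [of_apply, piLMoment_of_le hab'.le, if_neg hab'.ne]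
  rw [hblocks, det_fromBlocks_zero₁₂, det_permute, det_of_isLowerTriangular _ htri, det_transpose]
  simp [piLMoment_of_le]

lemma vand_mul_vand_append_mul_exp (t : Fin L → ℝ) (y : Fin N → ℝ) :
    vand t * vand (Fin.append t y) * ∏ i, Real.exp (-t i) =
      ∑ τ : Equiv.Perm (Fin L), (Equiv.Perm.sign τ : ℝ) *
        det (fromRows
          (of fun i c => t i ^ (τ i : ℕ) * Real.exp (-t i) * piL (finSumFinEquiv c) (t i))
          (of fun j c => piL (finSumFinEquiv c) (y j))) := by
  rw [vand_eq_sum_perm, vand_append_eq_det_fromRows, sum_mul, sum_mul]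
  refine sum_congr rfl fun τ _ => ?_
  simp only [det_fromRows_mul_left, prod_mul_distrib]
  ring

lemma volume_restrict_orth (L : ℕ) :
    (volume : Measure (Fin L → ℝ)).restrict (orth L) =
      Measure.pi fun _ => volume.restrict (Set.Ici 0) := by
  rw [orth, volume_pi, Measure.restrict_pi_pi]

theorem integral_vand_mul_vand_append (y : Fin N → ℝ) :
    ∫ t in orth L, vand t * vand (Fin.append t y) * ∏ i, Real.exp (-t i) =
      L.factorial * (∏ a : Fin L, (a.val.factorial : ℝ) ^ 2) *
        det (of fun a j : Fin N => piL (L + a) (y j)) := by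
  have hint (τ : Equiv.Perm (Fin L)) (i : Fin L) (c : Fin L ⊕ Fin N) :
      Integrable (fun x => x ^ (τ i : ℕ) * Real.exp (-x) * piL (finSumFinEquiv c) x)
        (volume.restrict (Set.Ici 0)) :=
    integrableOn_pow_mul_exp_neg_mul_piL _ _
  have hsign (τ : Equiv.Perm (Fin L)) : (Equiv.Perm.sign τ : ℝ) * Equiv.Perm.sign τ = 1 := by
    rcases Int.units_eq_one_or (Equiv.Perm.sign τ) with h | h <;> simp [h]
  simp_rw [vand_mul_vand_append_mul_exp, volume_restrict_orth]
  rw [integral_finsetSum _ fun τ _ => (integrable_det_fromRows _ _ _ (hint τ)).const_mul _]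
  calc _ = ∑ τ : Equiv.Perm (Fin L), (Equiv.Perm.sign τ : ℝ) * ((Equiv.Perm.sign τ : ℝ) *
        (∏ a : Fin L, (a.val.factorial : ℝ) ^ 2) * det (of fun a j : Fin N => piL (L + a) (y j))) :=
        sum_congr rfl fun τ _ => by
          rw [integral_const_mul, integral_det_fromRows _ _ _ (hint τ)]
          exact congrArg _ (det_piLMoment_fromRows τ y)
    _ = _ := by
      simp_rw [← mul_assoc, hsign, one_mul, sum_const, card_univ, Fintype.card_perm,
        Fintype.card_fin, nsmul_eq_mul, mul_assoc]

end KeyIntegral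

lemma integral_vand_mul_vand_append_neg {L N : ℕ} (ω : Fin N → ℝ) :
    ∫ t in orth L, vand t * vand (Fin.append t (-ω)) * ∏ i, Real.exp (-t i) =
      (-1) ^ (L * N) * vand (-ω) * Ntilde N L ω := by
  rw [Ntilde, ← integral_const_mul]
  refine integral_congr_ae (Filter.Eventually.of_forall fun t => ?_)
  have hrow (i : Fin L) : ∏ j, ((-ω) j - t i) = (-1) ^ N * ∏ j, (t i + ω j) := by
    rw [← Fin.prod_const N (-1 : ℝ), ← prod_mul_distrib]
    exact prod_congr rfl fun j _ => by simp only [Pi.neg_apply]; ring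
  simp only [vand_append, hrow, prod_mul_distrib, prod_const, card_univ, Fintype.card_fin, pow_mul']
  ring

lemma det_factorial_mul_laguerre (L N : ℕ) (ω : Fin N → ℝ) :
    det (of fun i j : Fin N =>
        ((L + (i : ℕ)).factorial : ℝ) * Real.exp (ω j) * laguerre (L + (i : ℕ)) (-ω j)) =
      (∏ i : Fin N, (-1) ^ (L + (i : ℕ))) * (∏ j, Real.exp (ω j)) *
        det (of fun a j : Fin N => piL (L + a) (-ω j)) := by
  rw [mul_assoc, ← det_mul_row, ← det_mul_column]
  congr 1
  ext i j
  have hsq : ((-1 : ℝ) ^ (L + (i : ℕ))) ^ 2 = 1 := by rw [← pow_mul, pow_mul']; simp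
  simp only [of_apply, piL]
  linear_combination -((L + (i : ℕ)).factorial : ℝ) * Real.exp (ω j) *
    laguerre (L + (i : ℕ)) (-ω j) * hsq

lemma prod_fin_factorial_sq (L : ℕ) :
    ∏ a : Fin L, (a.val.factorial : ℝ) ^ 2 = ∏ j ∈ Icc 1 (L - 1), (j.factorial : ℝ) ^ 2 := by
  cases L with
  | zero => simp
  | succ n =>
    simp only [Fin.prod_univ_succ, Fin.val_zero, Nat.factorial_zero, Nat.cast_one, one_pow, one_mul,
      Fin.val_succ, Nat.add_sub_cancel]
    rw [Fin.prod_univ_eq_prod_range (fun j => ((j + 1).factorial : ℝ) ^ 2), range_eq_Ico,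
      prod_Ico_add' (fun j : ℕ => (j.factorial : ℝ) ^ 2), zero_add, Ico_add_one_right_eq_Icc]

theorem statement3_general (N L : ℕ) (ω : Fin N → ℝ) :
    Matrix.det (Matrix.of fun i j : Fin N =>
        (((L + (i : ℕ)).factorial : ℝ)) * Real.exp (ω j) * laguerre (L + (i : ℕ)) (-ω j)) =
      vand ω * (∏ i, Real.exp (ω i)) * Ntilde N L ω /
        ((L.factorial : ℝ) * ∏ j ∈ Finset.Icc 1 (L - 1), ((j.factorial : ℝ)) ^ 2) := by
  have hkey := integral_vand_mul_vand_append (L := L) (-ω)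
  rw [integral_vand_mul_vand_append_neg, vand_neg, prod_fin_factorial_sq] at hkey
  simp only [Pi.neg_apply] at hkey
  set ε : ℝ := (-1) ^ (L * N) * ∏ j : Fin N, (-1) ^ (j : ℕ)
  have hsign : ∏ i : Fin N, (-1 : ℝ) ^ (L + (i : ℕ)) = ε := by
    simp only [ε, pow_add, prod_mul_distrib, Fin.prod_const, pow_mul]
  have hsq : ε ^ 2 = 1 := by
    rw [← hsign, ← prod_pow]
    exact prod_eq_one fun i _ => by rw [← pow_mul, pow_mul']; simp
  rw [det_factorial_mul_laguerre, eq_div_iff (by positivity), hsign]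
  linear_combination -ε * (∏ j, Real.exp (ω j)) * hkey
    + (∏ j, Real.exp (ω j)) * vand ω * Ntilde N L ω * hsq

theorem statement3 (N L : ℕ) (hN : 1 ≤ N) (hL : 1 ≤ L) (ω : Fin N → ℝ) :
    Matrix.det (Matrix.of fun i j : Fin N =>
        (((L + (i : ℕ)).factorial : ℝ)) * Real.exp (ω j) * laguerre (L + (i : ℕ)) (-ω j)) =
      vand ω * (∏ i, Real.exp (ω i)) * Ntilde N L ω /
        ((L.factorial : ℝ) * ∏ j ∈ Finset.Icc 1 (L - 1), ((j.factorial : ℝ)) ^ 2) :=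
  statement3_general N L ω
end

section
/- Let N ≥ 1 be an integer, p > 0 and ρ ≥ 0 real. Then (1/(N−1)!) · ∫₀^∞ (e^{−u}/(p+u)) · D^{N−1}(u) du = ((−1)^{N−1}/(N−1)!) · ∫₀^∞ (e^{−tp}/(1+t)) · (t/(1+t))^{N−1} · e^{−ρ t/(1+t)} dt, where D^{N−1}(u) denotes the (N−1)-st derivative at v = ρ of the function v ↦ e^{−v} ₀F₁(1; vu). (This is Proposition 5 of the paper, with ρ = |z|² and with the contour integral (1/2πi)∮_C e^{−v}₀F₁(1;vu)/(v−ρ)^N dv around the order-N pole evaluated as a derivative.) -/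
open MeasureTheory Finset Matrix

/-!
Expanding `e^{-v} ₀F₁(1; vu) = ∑ₘ uᵐ/(m!)² · vᵐe^{-v}` and differentiating termwise gives
`D^{N-1}(u) = ∑ₘ uᵐ/(m!)² · qₘ(ρ)`, where `qₘ` is the `(N-1)`-st derivative of `vᵐe^{-v}`.
Integrating termwise, `∫₀^∞ e^{-su} D^{N-1}(u) du = s⁻¹ ∑ₘ qₘ(ρ) s^{-m}/m!`, and the exponential
generating function `∑ₘ qₘ(ρ) xᵐ/m! = (x - 1)^{N-1} e^{ρ(x-1)}` is the `(N-1)`-st derivative in `ρ`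
of `∑ₘ (ρx)ᵐe^{-ρ}/m! = e^{ρ(x-1)}`. Writing `1/(p + u) = ∫₀^∞ e^{-t(p+u)} dt` and exchanging the
integrals, the left-hand side becomes the Laplace transform of `D^{N-1}` at `s = 1 + t`, integrated
against `e^{-tp}`; since `1/(1+t) - 1 = -t/(1+t)`, this is the right-hand side.
-/

open Real
open scoped Nat

theorem integrable_tsum_of_summable_integral_norm {α E : Type*}
    [MeasurableSpace α] {μ : Measure α} [NormedAddCommGroup E] {F : ℕ → α → E}
    (hF_int : ∀ i, Integrable (F i) μ) (hF_sum : Summable fun i => ∫ a, ‖F i a‖ ∂μ)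
    (hF : ∀ a, Summable (F · a)) :
    Integrable (fun a => ∑' i, F i a) μ := by
  refine ⟨aestronglyMeasurable_of_tendsto_ae Filter.atTop
    (fun k => Finset.aestronglyMeasurable_fun_sum (range k) fun i _ => (hF_int i).1)
    (ae_of_all _ fun a => (hF a).hasSum.tendsto_sum_nat), ?_⟩
  have hlintegral : ∀ i, ∫⁻ a, ‖F i a‖ₑ ∂μ = ENNReal.ofReal (∫ a, ‖F i a‖ ∂μ) := fun i =>
    (ofReal_integral_norm_eq_lintegral_enorm (hF_int i)).symm
  calc ∫⁻ a, ‖∑' i, F i a‖ₑ ∂μ ≤ ∫⁻ a, ∑' i, ‖F i a‖ₑ ∂μ :=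
        lintegral_mono fun a => enorm_tsum_le_tsum_enorm
    _ = ∑' i, ∫⁻ a, ‖F i a‖ₑ ∂μ := lintegral_tsum fun i => (hF_int i).1.enorm
    _ = ENNReal.ofReal (∑' i, ∫ a, ‖F i a‖ ∂μ) := by
        simp_rw [hlintegral]
        exact (ENNReal.ofReal_tsum_of_nonneg (fun i => integral_nonneg fun a => norm_nonneg _)
          hF_sum).symm
    _ < ⊤ := ENNReal.ofReal_lt_top

theorem integral_pow_mul_exp_neg_mul_Ioi (m : ℕ) {s : ℝ} (hs : 0 < s) :
    ∫ u in Set.Ioi 0, u ^ m * exp (-(s * u)) = m ! / s ^ (m + 1) := by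
  have h := integral_rpow_mul_exp_neg_mul_Ioi (a := (m : ℝ) + 1) (by positivity) hs
  rw [add_sub_cancel_right, Gamma_nat_eq_factorial, ← Nat.cast_succ, rpow_natCast] at h
  simp_rw [rpow_natCast] at h
  rw [h, Nat.succ_eq_add_one, div_pow, one_pow]
  ring

theorem integrableOn_pow_mul_exp_neg_mul_Ioi (m : ℕ) {s : ℝ} (hs : 0 < s) :
    IntegrableOn (fun u => u ^ m * exp (-(s * u))) (Set.Ioi 0) :=
  .of_integral_ne_zero (by rw [integral_pow_mul_exp_neg_mul_Ioi m hs]; positivity)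

theorem integral_div_add_eq_integral_exp_mul_integral {g : ℝ → ℝ}
    (hg : IntegrableOn g (Set.Ioi 0)) {p : ℝ} (hp : 0 < p) :
    ∫ u in Set.Ioi 0, g u / (p + u)
      = ∫ t in Set.Ioi 0, exp (-(t * p)) * ∫ u in Set.Ioi 0, exp (-(t * u)) * g u := by
  have hprod : Integrable (Function.uncurry fun u t => g u * exp (-((p + u) * t)))
      ((volume.restrict (Set.Ioi 0)).prod (volume.restrict (Set.Ioi 0))) := by
    refine (hg.norm.mul_prod (exp_neg_integrableOn_Ioi 0 hp)).mono'
      (hg.aestronglyMeasurable.comp_fst.mul (by fun_prop : Continuous _).aestronglyMeasurable) ?_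
    rw [Measure.prod_restrict]
    filter_upwards [ae_restrict_mem (measurableSet_Ioi.prod measurableSet_Ioi)]
      with ⟨u, t⟩ ⟨hu, ht⟩
    simp only [Function.uncurry_apply_pair, norm_mul, Real.norm_eq_abs, abs_exp]
    gcongr
    rw [neg_mul]
    nlinarith [mul_pos (Set.mem_Ioi.mp hu) (Set.mem_Ioi.mp ht)]
  calc ∫ u in Set.Ioi 0, g u / (p + u)
      = ∫ u in Set.Ioi 0, ∫ t in Set.Ioi 0, g u * exp (-((p + u) * t)) := by
        refine setIntegral_congr_fun measurableSet_Ioi fun u hu => ?_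
        have h := integral_pow_mul_exp_neg_mul_Ioi 0 (add_pos hp hu)
        simp only [pow_zero, one_mul, Nat.factorial_zero, Nat.cast_one, zero_add, pow_one] at h
        rw [integral_const_mul, h, div_eq_mul_one_div]
    _ = ∫ t in Set.Ioi 0, ∫ u in Set.Ioi 0, g u * exp (-((p + u) * t)) :=
        integral_integral_swap hprod
    _ = ∫ t in Set.Ioi 0, exp (-(t * p)) * ∫ u in Set.Ioi 0, exp (-(t * u)) * g u := by
        refine setIntegral_congr_fun measurableSet_Ioi fun t _ => ?_
        rw [← integral_const_mul]
        refine integral_congr_ae (ae_of_all _ fun u => ?_)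
        simp only
        rw [← mul_assoc, ← exp_add]
        ring_nf

/-- The `n`-th derivative of `v ↦ vᵐ e^{-v}`, through the product rule
`(vᵐ e^{-v})' = m vᵐ⁻¹ e^{-v} - vᵐ e^{-v}`; for `m = 0` the truncated `m - 1` carries the
coefficient `0`. -/
noncomputable def powMulExpDeriv : ℕ → ℕ → ℝ → ℝ
  | 0, m, v => v ^ m * exp (-v)
  | n + 1, m, v => m * powMulExpDeriv n (m - 1) v - powMulExpDeriv n m v

theorem hasDerivAt_powMulExpDeriv (n m : ℕ) (v : ℝ) :
    HasDerivAt (powMulExpDeriv n m) (powMulExpDeriv (n + 1) m v) v := by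
  induction n generalizing m with
  | zero =>
    have h : HasDerivAt (fun w => w ^ m * exp (-w)) _ v :=
      (hasDerivAt_pow m v).mul (hasDerivAt_neg v).exp
    exact h.congr_deriv (by simp only [powMulExpDeriv]; ring)
  | succ n ih => exact ((ih (m - 1)).const_mul (m : ℝ)).sub (ih m)

theorem abs_powMulExpDeriv_le_add_pow {R v : ℝ} (hv : |v| ≤ R) (n m : ℕ) :
    |powMulExpDeriv n m v| ≤ ((m : ℝ) + n) ^ n * (R + 1) ^ m * exp R := by
  have hR : 0 ≤ R := (abs_nonneg v).trans hv
  induction n generalizing m with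
  | zero =>
    simp only [powMulExpDeriv, pow_zero, one_mul, abs_mul, abs_pow, abs_exp]
    gcongr
    · linarith
    · linarith [neg_abs_le v]
  | succ n ih =>
    have hprev : |powMulExpDeriv n (m - 1) v| ≤ ((m : ℝ) + n) ^ n * (R + 1) ^ m * exp R := by
      have hm : ((m - 1 : ℕ) : ℝ) ≤ m := by exact_mod_cast m.sub_le 1
      refine (ih (m - 1)).trans ?_
      gcongr
      · linarith
      · exact m.sub_le 1
    have hgrow : ((m : ℝ) + n) ^ n ≤ ((m : ℝ) + (n + 1)) ^ n := by gcongr; linarith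
    calc |powMulExpDeriv (n + 1) m v|
        ≤ m * |powMulExpDeriv n (m - 1) v| + |powMulExpDeriv n m v| := by
          simp only [powMulExpDeriv]
          refine (abs_sub _ _).trans_eq ?_
          rw [abs_mul, Nat.abs_cast]
      _ ≤ (m + 1) * (((m : ℝ) + n) ^ n * (R + 1) ^ m * exp R) := by
          linarith [mul_le_mul_of_nonneg_left hprev m.cast_nonneg, ih m]
      _ ≤ ((m : ℝ) + (n + 1)) * (((m : ℝ) + (n + 1)) ^ n * (R + 1) ^ m * exp R) := by
          gcongr
          linarith [n.cast_nonneg (α := ℝ)]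
      _ = ((m : ℝ) + ↑(n + 1)) ^ (n + 1) * (R + 1) ^ m * exp R := by
          push_cast
          ring

theorem abs_powMulExpDeriv_le {R v : ℝ} (hv : |v| ≤ R) (n m : ℕ) :
    |powMulExpDeriv n m v| ≤ n ! * exp (n + R) * (exp 1 * (R + 1)) ^ m := by
  have hpow : ((m : ℝ) + n) ^ n ≤ n ! * exp (m + n) := by
    have := pow_div_factorial_le_exp (x := (m : ℝ) + n) (by positivity) n
    rwa [div_le_iff₀ (by positivity), mul_comm] at this
  calc |powMulExpDeriv n m v| ≤ ((m : ℝ) + n) ^ n * (R + 1) ^ m * exp R :=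
        abs_powMulExpDeriv_le_add_pow hv n m
    _ ≤ n ! * exp (m + n) * (R + 1) ^ m * exp R := by
        have : 0 ≤ R := (abs_nonneg v).trans hv
        gcongr
    _ = n ! * exp (n + R) * (exp 1 * (R + 1)) ^ m := by
        rw [mul_pow, exp_one_pow, add_comm (m : ℝ), exp_add, exp_add]
        ring

theorem hasSum_powMulExpDeriv (n : ℕ) (ρ x : ℝ) :
    HasSum (fun m => powMulExpDeriv n m ρ * x ^ m / m !) ((x - 1) ^ n * exp (ρ * (x - 1))) := by
  induction n with
  | zero =>
    have h := (NormedSpace.expSeries_div_hasSum_exp (ρ * x)).mul_left (exp (-ρ))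
    have hterm : (fun m => exp (-ρ) * ((ρ * x) ^ m / m !))
        = fun m => powMulExpDeriv 0 m ρ * x ^ m / m ! := by
      funext m
      simp only [powMulExpDeriv, mul_pow]
      ring
    have hsum : NormedSpace.exp (ρ * x) * exp (-ρ) = (x - 1) ^ 0 * exp (ρ * (x - 1)) := by
      rw [← Real.exp_eq_exp_ℝ, ← exp_add, pow_zero, one_mul]
      ring_nf
    rw [hterm, mul_comm, hsum] at h
    exact h
  | succ n ih =>
    have hshift : HasSum (fun m => m * powMulExpDeriv n (m - 1) ρ * x ^ m / m !)
        (x * ((x - 1) ^ n * exp (ρ * (x - 1)))) := by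
      refine (hasSum_nat_add_iff' 1).mp ?_
      have hterm : (fun m => x * (powMulExpDeriv n m ρ * x ^ m / m !)) = fun m =>
          ((m + 1 : ℕ) : ℝ) * powMulExpDeriv n (m + 1 - 1) ρ * x ^ (m + 1) / (m + 1)! := by
        funext m
        rw [Nat.add_sub_cancel, Nat.factorial_succ, pow_succ]
        push_cast
        field_simp
      simpa [hterm] using ih.mul_left x
    have hterm : (fun m => (m * powMulExpDeriv n (m - 1) ρ * x ^ m / m !) -
        powMulExpDeriv n m ρ * x ^ m / m !) =
          fun m => powMulExpDeriv (n + 1) m ρ * x ^ m / m ! := by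
      funext m
      simp only [powMulExpDeriv]
      ring
    rw [← hterm, show (x - 1) ^ (n + 1) * exp (ρ * (x - 1))
      = x * ((x - 1) ^ n * exp (ρ * (x - 1))) - (x - 1) ^ n * exp (ρ * (x - 1)) by ring]
    exact hshift.sub ih

noncomputable def expNegF01Deriv (n : ℕ) (v u : ℝ) : ℝ :=
  ∑' m : ℕ, u ^ m / (m ! : ℝ) ^ 2 * powMulExpDeriv n m v

theorem abs_pow_div_factorial_sq_mul_powMulExpDeriv_le {R v : ℝ} (hv : |v| ≤ R) (n m : ℕ)
    (u : ℝ) :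
    |u ^ m / (m ! : ℝ) ^ 2 * powMulExpDeriv n m v|
      ≤ n ! * exp (n + R) * ((exp 1 * (R + 1) * |u|) ^ m / m !) := by
  have hfact : (m ! : ℝ) ≤ (m ! : ℝ) ^ 2 :=
    le_self_pow₀ (by exact_mod_cast m.factorial_pos) two_ne_zero
  rw [abs_mul, abs_div, abs_pow, abs_pow, Nat.abs_cast]
  calc |u| ^ m / (m ! : ℝ) ^ 2 * |powMulExpDeriv n m v|
      ≤ |u| ^ m / m ! * (n ! * exp (n + R) * (exp 1 * (R + 1)) ^ m) := by
        gcongr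
        exact abs_powMulExpDeriv_le hv n m
    _ = n ! * exp (n + R) * ((exp 1 * (R + 1) * |u|) ^ m / m !) := by simp only [mul_pow]; ring

theorem summable_pow_div_factorial_sq_mul_powMulExpDeriv (n : ℕ) (v u : ℝ) :
    Summable fun m => u ^ m / (m ! : ℝ) ^ 2 * powMulExpDeriv n m v :=
  .of_norm_bounded ((summable_pow_div_factorial _).mul_left _)
    (abs_pow_div_factorial_sq_mul_powMulExpDeriv_le le_rfl n · u)

theorem hasDerivAt_expNegF01Deriv (n : ℕ) (u v : ℝ) :
    HasDerivAt (expNegF01Deriv n · u) (expNegF01Deriv (n + 1) v u) v := by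
  have hball : ∀ w ∈ Metric.ball v 1, |w| ≤ |v| + 1 := fun w hw => by
    have := abs_sub_abs_le_abs_sub w v
    rw [Metric.mem_ball, dist_eq] at hw
    linarith
  exact hasDerivAt_tsum_of_isPreconnected
    ((summable_pow_div_factorial _).mul_left _) Metric.isOpen_ball
    (convex_ball v 1).isPreconnected
    (fun m w _ => (hasDerivAt_powMulExpDeriv n m w).const_mul _)
    (fun m w hw => abs_pow_div_factorial_sq_mul_powMulExpDeriv_le (hball w hw) (n + 1) m u)
    (Metric.mem_ball_self one_pos) (summable_pow_div_factorial_sq_mul_powMulExpDeriv n v u)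
    (Metric.mem_ball_self one_pos)

theorem iteratedDeriv_exp_neg_mul_f01 (n : ℕ) (u : ℝ) :
    iteratedDeriv n (fun v => exp (-v) * f01 (v * u)) = fun v => expNegF01Deriv n v u := by
  induction n with
  | zero =>
    funext v
    rw [iteratedDeriv_zero, f01, expNegF01Deriv, ← tsum_mul_left]
    refine tsum_congr fun m => ?_
    simp only [powMulExpDeriv, mul_pow]
    ring
  | succ n ih =>
    rw [iteratedDeriv_succ, ih]
    exact funext fun v => (hasDerivAt_expNegF01Deriv n u v).deriv

theorem integral_exp_neg_mul_mul_pow_div_factorial_sq (m : ℕ) (c : ℝ) {s : ℝ} (hs : 0 < s) :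
    ∫ u in Set.Ioi 0, exp (-(s * u)) * (u ^ m / (m ! : ℝ) ^ 2 * c)
      = c * (1 / s) ^ m / m ! * (1 / s) := by
  simp_rw [show ∀ u, exp (-(s * u)) * (u ^ m / (m ! : ℝ) ^ 2 * c)
    = c / (m ! : ℝ) ^ 2 * (u ^ m * exp (-(s * u))) from fun u => by ring]
  rw [integral_const_mul, integral_pow_mul_exp_neg_mul_Ioi m hs, div_pow, one_pow]
  field_simp
  ring

theorem integrableOn_exp_neg_mul_pow_div_factorial_sq_mul (m : ℕ) (c : ℝ) {s : ℝ}
    (hs : 0 < s) :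
    IntegrableOn (fun u => exp (-(s * u)) * (u ^ m / (m ! : ℝ) ^ 2 * c)) (Set.Ioi 0) :=
  IntegrableOn.congr_fun ((integrableOn_pow_mul_exp_neg_mul_Ioi m hs).const_mul
    (c / (m ! : ℝ) ^ 2)) (fun u _ => by ring) measurableSet_Ioi

theorem summable_integral_norm_exp_neg_mul_pow_div_factorial_sq_mul_powMulExpDeriv (n : ℕ)
    (ρ : ℝ) {s : ℝ} (hs : 0 < s) :
    Summable fun m => ∫ u in Set.Ioi 0,
      ‖exp (-(s * u)) * (u ^ m / (m ! : ℝ) ^ 2 * powMulExpDeriv n m ρ)‖ := by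
  have hnorm : ∀ m : ℕ, ∫ u in Set.Ioi 0,
      ‖exp (-(s * u)) * (u ^ m / (m ! : ℝ) ^ 2 * powMulExpDeriv n m ρ)‖
        = |powMulExpDeriv n m ρ| * (1 / s) ^ m / m ! * (1 / s) := by
    intro m
    rw [← integral_exp_neg_mul_mul_pow_div_factorial_sq m _ hs]
    refine setIntegral_congr_fun measurableSet_Ioi fun u hu => ?_
    rw [Real.norm_eq_abs, abs_mul, abs_mul, abs_div, abs_pow, abs_exp, abs_of_pos hu,
      abs_of_pos (by positivity : (0 : ℝ) < (m ! : ℝ) ^ 2)]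
  simp_rw [hnorm]
  refine .of_nonneg_of_le (fun m => by positivity) (fun m => ?_)
    (((summable_pow_div_factorial (exp 1 * (|ρ| + 1) * (1 / s))).mul_left
      (n ! * exp (n + |ρ|))).mul_right (1 / s))
  calc |powMulExpDeriv n m ρ| * (1 / s) ^ m / m ! * (1 / s)
      ≤ n ! * exp (n + |ρ|) * (exp 1 * (|ρ| + 1)) ^ m * (1 / s) ^ m / m ! * (1 / s) := by
        gcongr
        exact abs_powMulExpDeriv_le le_rfl n m
    _ = n ! * exp (n + |ρ|) * ((exp 1 * (|ρ| + 1) * (1 / s)) ^ m / m !) * (1 / s) := by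
        rw [mul_pow (_ * _)]
        ring

theorem integrableOn_exp_neg_mul_expNegF01Deriv (n : ℕ) (ρ : ℝ) {s : ℝ} (hs : 0 < s) :
    IntegrableOn (fun u => exp (-(s * u)) * expNegF01Deriv n ρ u) (Set.Ioi 0) := by
  simp_rw [expNegF01Deriv, ← tsum_mul_left]
  exact integrable_tsum_of_summable_integral_norm
    (fun m => integrableOn_exp_neg_mul_pow_div_factorial_sq_mul m _ hs)
    (summable_integral_norm_exp_neg_mul_pow_div_factorial_sq_mul_powMulExpDeriv n ρ hs)
    fun u => (summable_pow_div_factorial_sq_mul_powMulExpDeriv n ρ u).mul_left _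

theorem integral_exp_neg_mul_expNegF01Deriv (n : ℕ) (ρ : ℝ) {s : ℝ} (hs : 0 < s) :
    ∫ u in Set.Ioi 0, exp (-(s * u)) * expNegF01Deriv n ρ u
      = 1 / s * (1 / s - 1) ^ n * exp (ρ * (1 / s - 1)) := by
  simp_rw [expNegF01Deriv, ← tsum_mul_left]
  have h := hasSum_integral_of_summable_integral_norm
    (fun m => integrableOn_exp_neg_mul_pow_div_factorial_sq_mul m _ hs)
    (summable_integral_norm_exp_neg_mul_pow_div_factorial_sq_mul_powMulExpDeriv n ρ hs)
  simp_rw [integral_exp_neg_mul_mul_pow_div_factorial_sq _ _ hs] at h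
  refine h.unique ?_
  rw [mul_comm (1 / s), mul_right_comm]
  exact (hasSum_powMulExpDeriv n ρ (1 / s)).mul_right (1 / s)

theorem statement7_general (N : ℕ) (p : ℝ) (hp : 0 < p) (ρ : ℝ) :
    (1 / ((N - 1).factorial : ℝ)) *
        ∫ u in Set.Ioi (0 : ℝ),
          (Real.exp (-u) / (p + u)) *
            iteratedDeriv (N - 1) (fun v => Real.exp (-v) * f01 (v * u)) ρ =
      ((-1 : ℝ) ^ (N - 1) / ((N - 1).factorial : ℝ)) *
        ∫ t in Set.Ioi (0 : ℝ),
          (Real.exp (-(t * p)) / (1 + t)) * (t / (1 + t)) ^ (N - 1) *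
            Real.exp (-(ρ * t / (1 + t))) := by
  set n := N - 1
  have hLHS : ∫ u in Set.Ioi 0, exp (-u) / (p + u) *
      iteratedDeriv n (fun v => exp (-v) * f01 (v * u)) ρ
        = ∫ t in Set.Ioi 0, exp (-(t * p)) *
            ∫ u in Set.Ioi 0, exp (-(t * u)) * (exp (-u) * expNegF01Deriv n ρ u) := by
    simp_rw [iteratedDeriv_exp_neg_mul_f01, div_mul_eq_mul_div]
    refine integral_div_add_eq_integral_exp_mul_integral ?_ hp
    simpa using integrableOn_exp_neg_mul_expNegF01Deriv n ρ one_pos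
  have hinner : ∀ t ∈ Set.Ioi (0 : ℝ), exp (-(t * p)) *
      ∫ u in Set.Ioi 0, exp (-(t * u)) * (exp (-u) * expNegF01Deriv n ρ u)
        = (-1) ^ n * (exp (-(t * p)) / (1 + t) * (t / (1 + t)) ^ n *
            exp (-(ρ * t / (1 + t)))) := by
    intro t ht
    have h1t : (0 : ℝ) < 1 + t := by linarith [Set.mem_Ioi.mp ht]
    have hlaplace := integral_exp_neg_mul_expNegF01Deriv n ρ h1t
    have hshift : 1 / (1 + t) - 1 = -(t / (1 + t)) := by field_simp; ring
    simp_rw [← mul_assoc, ← exp_add, show ∀ u, -(t * u) + -u = -((1 + t) * u) from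
      fun u => by ring, hlaplace, hshift, neg_pow (t / (1 + t))]
    ring_nf
  rw [hLHS, setIntegral_congr_fun measurableSet_Ioi hinner, integral_const_mul]
  ring

theorem statement7 (N : ℕ) (hN : 1 ≤ N) (p : ℝ) (hp : 0 < p) (ρ : ℝ) (hρ : 0 ≤ ρ) :
    (1 / ((N - 1).factorial : ℝ)) *
        ∫ u in Set.Ioi (0 : ℝ),
          (Real.exp (-u) / (p + u)) *
            iteratedDeriv (N - 1) (fun v => Real.exp (-v) * f01 (v * u)) ρ =
      ((-1 : ℝ) ^ (N - 1) / ((N - 1).factorial : ℝ)) *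
        ∫ t in Set.Ioi (0 : ℝ),
          (Real.exp (-(t * p)) / (1 + t)) * (t / (1 + t)) ^ (N - 1) *
            Real.exp (-(ρ * t / (1 + t))) :=
  statement7_general N p hp ρ
end

section
/- Let N ≥ 1 be an integer, ρ ≥ 0 and τ ∈ [0,1] real. Then ((−1)^{N−1}/(N−1)!) · ∫₀^∞ (q+ρ)^N e^{−q} · D^{N−1}(q) dq = e^{−ρτ} · τ^{N−1} · ( N·∑_{m=0}^{N} ρ^m/m! − τρ·∑_{m=0}^{N−1} ρ^m/m! ), where D^{N−1}(q) denotes the (N−1)-st derivative at w = ρ of the function w ↦ e^{−wτ}(1+w(1−τ))/(q+w). -/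
open MeasureTheory Finset Matrix

section Aux8

lemma momIntOn (m : ℕ) : IntegrableOn (fun q : ℝ => q ^ m * Real.exp (-q)) (Set.Ioi 0) := by
  have h := Real.GammaIntegral_convergent (s := (m:ℝ)+1) (by positivity)
  refine h.congr_fun ?_ measurableSet_Ioi
  intro x hx
  simp only [Set.mem_Ioi] at hx
  simp only [add_sub_cancel_right, Real.rpow_natCast]
  ring

lemma momVal (m : ℕ) : ∫ q in Set.Ioi (0:ℝ), q ^ m * Real.exp (-q) = (m.factorial : ℝ) := by
  have h := Real.Gamma_eq_integral (s := (m:ℝ)+1) (by positivity)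
  rw [Real.Gamma_nat_eq_factorial] at h
  rw [h]
  refine setIntegral_congr_fun measurableSet_Ioi fun x hx => ?_
  simp only [Set.mem_Ioi] at hx
  simp only [add_sub_cancel_right, Real.rpow_natCast]
  ring

lemma polyEq (ρ : ℝ) (k : ℕ) : ∀ q : ℝ, (q+ρ)^k * Real.exp (-q) =
    ∑ m ∈ range (k+1), (ρ^(k-m) * (k.choose m : ℝ)) * (q^m * Real.exp (-q)) := by
  intro q
  rw [add_pow]
  rw [Finset.sum_mul]
  exact Finset.sum_congr rfl fun m hm => by ring

lemma polyIntOn (ρ : ℝ) (k : ℕ) :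
    IntegrableOn (fun q : ℝ => (q+ρ)^k * Real.exp (-q)) (Set.Ioi 0) := by
  have : IntegrableOn (fun q : ℝ => ∑ m ∈ range (k+1),
      (ρ^(k-m) * (k.choose m : ℝ)) * (q^m * Real.exp (-q))) (Set.Ioi 0) :=
    integrable_finset_sum _ fun m _ => (momIntOn m).const_mul _
  exact this.congr_fun (fun x _ => (polyEq ρ k x).symm) measurableSet_Ioi

lemma polyVal (ρ : ℝ) (k : ℕ) : ∫ q in Set.Ioi (0:ℝ), (q+ρ)^k * Real.exp (-q) =
    (k.factorial : ℝ) * ∑ m ∈ range (k+1), ρ^m / (m.factorial : ℝ) := by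
  rw [show (fun q : ℝ => (q+ρ)^k * Real.exp (-q)) = fun q => ∑ m ∈ range (k+1),
      (ρ^(k-m) * (k.choose m : ℝ)) * (q^m * Real.exp (-q)) from funext (polyEq ρ k)]
  rw [integral_finset_sum _ fun m _ => ((momIntOn m).const_mul _)]
  have : ∀ m ∈ range (k+1), ∫ q in Set.Ioi (0:ℝ),
      (ρ^(k-m) * (k.choose m : ℝ)) * (q^m * Real.exp (-q))
      = ρ^(k-m) * (k.choose m : ℝ) * (m.factorial : ℝ) := by
    intro m _
    rw [MeasureTheory.integral_const_mul, momVal]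
  rw [Finset.sum_congr rfl this]
  rw [Finset.mul_sum]
  rw [← Finset.sum_range_reflect]
  refine Finset.sum_congr rfl fun j hj => ?_
  have hjk : j ≤ k := Nat.lt_succ_iff.mp (Finset.mem_range.mp hj)
  have h1 : k - (k - j) = j := Nat.sub_sub_self hjk
  have h2 : k.choose (k - j) = k.choose j := Nat.choose_symm hjk
  simp only [Nat.add_sub_cancel]
  rw [h1, h2]
  have hfac : ((k.choose j : ℕ) * j.factorial * (k-j).factorial : ℝ) = (k.factorial : ℝ) := by
    exact_mod_cast congrArg (Nat.cast (R := ℝ)) (Nat.choose_mul_factorial_mul_factorial hjk)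
  have hj0 : (j.factorial : ℝ) ≠ 0 := Nat.cast_ne_zero.mpr j.factorial_ne_zero
  push_cast at hfac ⊢
  field_simp
  linear_combination ρ^j * hfac


/-- auxiliary: Leibniz sum for the k-th derivative of `w ↦ e^{-wτ}/(q+w)` (without exp factor). -/
noncomputable def AD (q τ : ℝ) (k : ℕ) (w : ℝ) : ℝ :=
  ∑ p ∈ Finset.HasAntidiagonal.antidiagonal k,
    ((p.1+p.2).choose p.1 : ℝ) * ((-τ)^p.1 * ((-1:ℝ)^p.2 * (p.2.factorial : ℝ) * (q+w)^(-(p.2:ℤ)-1)))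

/-- auxiliary: claimed formula for the k-th derivative of the full integrand function. -/
noncomputable def DD (q τ : ℝ) (k : ℕ) (w : ℝ) : ℝ :=
  (1-τ)*(-τ)^k*Real.exp (-(w*τ)) + (1 - q*(1-τ)) * (AD q τ k w * Real.exp (-(w*τ)))

lemma AD_rec (q τ : ℝ) (k : ℕ) (w : ℝ) :
    (∑ p ∈ Finset.HasAntidiagonal.antidiagonal k, ((p.1+p.2).choose p.1 : ℝ) *
        ((-τ)^p.1 * ((-1:ℝ)^p.2 * (p.2.factorial : ℝ) * ((-(p.2:ℤ)-1) * (q+w)^(-(p.2:ℤ)-1-1)))))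
      + (-τ) * AD q τ k w = AD q τ (k+1) w := by
  set v : ℕ → ℕ → ℝ := fun a b => (-τ)^a * ((-1:ℝ)^b * (b.factorial : ℝ) * (q+w)^(-(b:ℤ)-1)) with hv
  have e1 : (∑ p ∈ Finset.HasAntidiagonal.antidiagonal k, ((p.1+p.2).choose p.1 : ℝ) *
        ((-τ)^p.1 * ((-1:ℝ)^p.2 * (p.2.factorial : ℝ) * ((-(p.2:ℤ)-1) * (q+w)^(-(p.2:ℤ)-1-1)))))
      = ∑ p ∈ Finset.HasAntidiagonal.antidiagonal k, (k.choose p.1 : ℝ) * v p.1 (p.2+1) := by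
    refine Finset.sum_congr rfl fun p hp => ?_
    rw [Finset.HasAntidiagonal.mem_antidiagonal] at hp
    rw [← hp]
    simp only [hv]
    have : (-((p.2:ℤ))-1-1) = (-((p.2+1 : ℕ):ℤ)-1) := by push_cast; ring
    rw [this]
    have : ((p.2+1).factorial : ℝ) = ((p.2:ℝ)+1) * (p.2.factorial : ℝ) := by
      rw [Nat.factorial_succ]; push_cast; ring
    rw [this, pow_succ]
    push_cast
    ring
  have e2 : (-τ) * AD q τ k w = ∑ p ∈ Finset.HasAntidiagonal.antidiagonal k, (k.choose p.1 : ℝ) * v (p.1+1) p.2 := by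
    rw [AD, Finset.mul_sum]
    refine Finset.sum_congr rfl fun p hp => ?_
    rw [Finset.HasAntidiagonal.mem_antidiagonal] at hp
    rw [← hp]
    simp only [hv, pow_succ]
    ring
  have e3 : AD q τ (k+1) w = ∑ p ∈ Finset.HasAntidiagonal.antidiagonal (k+1), ((k+1).choose p.1 : ℝ) * v p.1 p.2 := by
    rw [AD]
    refine Finset.sum_congr rfl fun p hp => ?_
    rw [Finset.HasAntidiagonal.mem_antidiagonal] at hp
    rw [hp]
  have e4 : ∑ p ∈ Finset.HasAntidiagonal.antidiagonal (k+1), ((k+1).choose p.1 : ℝ) * v p.1 p.2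
      = v 0 (k+1) + ∑ p ∈ Finset.HasAntidiagonal.antidiagonal k,
          (((k.choose p.1 : ℝ) + (k.choose (p.1+1) : ℝ)) * v (p.1+1) p.2) := by
    rw [Finset.Nat.sum_antidiagonal_succ]
    simp only [Nat.choose_succ_succ, Nat.choose_zero_right, Nat.cast_one, one_mul, Nat.cast_add]
  have e5 : (v 0 (k+1) + ∑ p ∈ Finset.HasAntidiagonal.antidiagonal k, (k.choose (p.1+1) : ℝ) * v (p.1+1) p.2)
      = ∑ p ∈ Finset.HasAntidiagonal.antidiagonal k, (k.choose p.1 : ℝ) * v p.1 (p.2+1) := by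
    have h1 : ∑ p ∈ Finset.HasAntidiagonal.antidiagonal (k+1), (k.choose p.1 : ℝ) * v p.1 p.2
        = (k.choose 0 : ℝ) * v 0 (k+1) + ∑ p ∈ Finset.HasAntidiagonal.antidiagonal k, (k.choose (p.1+1) : ℝ) * v (p.1+1) p.2 :=
      Finset.Nat.sum_antidiagonal_succ
    have h2 : ∑ p ∈ Finset.HasAntidiagonal.antidiagonal (k+1), (k.choose p.1 : ℝ) * v p.1 p.2
        = (k.choose (k+1) : ℝ) * v (k+1) 0 + ∑ p ∈ Finset.HasAntidiagonal.antidiagonal k, (k.choose p.1 : ℝ) * v p.1 (p.2+1) :=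
      Finset.Nat.sum_antidiagonal_succ'
    rw [Nat.choose_eq_zero_of_lt (Nat.lt_succ_self k)] at h2
    simp only [Nat.choose_zero_right, Nat.cast_one, one_mul, Nat.cast_zero, zero_mul, zero_add] at h1 h2
    rw [← h1, h2]
  rw [e1, e2, e3, e4, ← e5]
  simp only [add_mul]
  rw [Finset.sum_add_distrib]
  ring

lemma DD_hasDeriv (q τ : ℝ) (k : ℕ) (w : ℝ) (hw : q + w ≠ 0) :
    HasDerivAt (DD q τ k) (DD q τ (k+1) w) w := by
  have hexp : HasDerivAt (fun w : ℝ => Real.exp (-(w*τ))) (Real.exp (-(w*τ)) * (-τ)) w := by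
    simpa using (((hasDerivAt_id w).mul_const τ).neg).exp
  have hAD : HasDerivAt (AD q τ k)
      (∑ p ∈ Finset.HasAntidiagonal.antidiagonal k, ((p.1+p.2).choose p.1 : ℝ) *
        ((-τ)^p.1 * ((-1:ℝ)^p.2 * (p.2.factorial : ℝ) * ((-(p.2:ℤ)-1) * (q+w)^(-(p.2:ℤ)-1-1))))) w := by
    apply HasDerivAt.fun_sum
    intro p _
    have h0 : HasDerivAt (fun w : ℝ => q+w) 1 w := (hasDerivAt_id w).const_add q
    have hb : HasDerivAt (fun w : ℝ => (q+w)^(-(p.2:ℤ)-1))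
        ((-(p.2:ℝ)-1) * (q+w)^(-(p.2:ℤ)-1-1)) w := by
      have hb' := (hasDerivAt_zpow (-(p.2:ℤ)-1) (q+w) (Or.inl hw)).comp w h0
      exact hb'.congr_deriv (by push_cast; ring)
    exact ((hb.const_mul ((-1:ℝ)^p.2 * (p.2.factorial : ℝ))).const_mul ((-τ)^p.1)).const_mul _
  have hprod := hAD.mul hexp
  have full := (hexp.const_mul ((1-τ)*(-τ)^k)).add (hprod.const_mul (1 - q*(1-τ)))
  have hfun : (fun w => (1-τ)*(-τ)^k * Real.exp (-(w*τ)) +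
      (1 - q*(1-τ)) * (AD q τ k w * Real.exp (-(w*τ)))) = DD q τ k := rfl
  replace full : HasDerivAt (DD q τ k) _ w := full
  convert full using 1
  rw [DD, ← AD_rec q τ k w]
  ring

lemma iter_eq (q τ : ℝ) (k : ℕ) :
    Set.EqOn (iteratedDeriv k (fun w => Real.exp (-(w*τ)) * (1 + w*(1-τ)) / (q+w)))
      (DD q τ k) {w | q + w ≠ 0} := by
  induction k with
  | zero =>
    intro w hw
    simp only [Set.mem_setOf_eq] at hw
    rw [iteratedDeriv_zero]
    simp only [DD, AD, pow_zero, Finset.Nat.antidiagonal_zero, Finset.sum_singleton]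
    norm_num
    field_simp
    ring
  | succ k ih =>
    intro w hw
    have hw' : q + w ≠ 0 := hw
    have hopen : IsOpen {w : ℝ | q + w ≠ 0} :=
      IsOpen.preimage (continuous_const.add continuous_id) isOpen_ne
    rw [iteratedDeriv_succ]
    have heq : iteratedDeriv k (fun w => Real.exp (-(w*τ)) * (1 + w*(1-τ)) / (q+w))
        =ᶠ[nhds w] DD q τ k := Filter.eventuallyEq_of_mem (hopen.mem_nhds hw) ih
    rw [heq.deriv_eq]
    exact (DD_hasDeriv q τ k w hw').deriv


noncomputable def SS (ρ : ℝ) (k : ℕ) : ℝ := ∑ m ∈ Finset.range (k+1), ρ^m/(m.factorial:ℝ)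

lemma SS_succ (ρ : ℝ) (k : ℕ) : SS ρ (k+1) = SS ρ k + ρ^(k+1)/((k+1).factorial:ℝ) :=
  Finset.sum_range_succ _ _

lemma keyid (ρ τ : ℝ) (n : ℕ) :
    (1-τ)*τ^n*((n:ℝ)+1)*SS ρ (n+1) +
      ∑ j ∈ Finset.range (n+1), τ^j*((1+ρ*(1-τ))*SS ρ j - (1-τ)*((j:ℝ)+1)*SS ρ (j+1))
    = τ^n*(((n:ℝ)+1)*SS ρ (n+1) - τ*ρ*SS ρ n) := by
  induction n with
  | zero =>
    simp only [SS, Finset.sum_range_succ, Finset.sum_range_zero, Finset.sum_range_one]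
    norm_num
    ring
  | succ n ih =>
    rw [Finset.sum_range_succ]
    have h1 := SS_succ ρ (n+1)
    have h2 := SS_succ ρ n
    have hf : ((n+1).factorial:ℝ) ≠ 0 := Nat.cast_ne_zero.mpr (Nat.factorial_ne_zero _)
    have hr : ((n:ℝ)+2) * (ρ^(n+2)/((n+2).factorial:ℝ)) = ρ * (ρ^(n+1)/((n+1).factorial:ℝ)) := by
      rw [show n+2 = (n+1)+1 from rfl, Nat.factorial_succ (n+1)]
      push_cast
      field_simp
      ring
    rw [h2] at ih
    rw [h1, h2]
    push_cast at ih hr ⊢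
    linear_combination ih - τ^(n+1) * hr

lemma polyValS (ρ : ℝ) (k : ℕ) : ∫ q in Set.Ioi (0:ℝ), (q+ρ)^k * Real.exp (-q) =
    (k.factorial : ℝ) * SS ρ k := polyVal ρ k

end Aux8

theorem statement8 (N : ℕ) (hN : 1 ≤ N) (ρ τ : ℝ) (hρ : 0 ≤ ρ) (hτ0 : 0 ≤ τ) (hτ1 : τ ≤ 1) :
    ((-1 : ℝ) ^ (N - 1) / ((N - 1).factorial : ℝ)) *
        ∫ q in Set.Ioi (0 : ℝ),
          (q + ρ) ^ N * Real.exp (-q) *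
            iteratedDeriv (N - 1)
              (fun w => Real.exp (-(w * τ)) * (1 + w * (1 - τ)) / (q + w)) ρ =
      Real.exp (-(ρ * τ)) * τ ^ (N - 1) *
        ((N : ℝ) * (∑ m ∈ Finset.range (N + 1), ρ ^ m / (m.factorial : ℝ)) -
          τ * ρ * ∑ m ∈ Finset.range N, ρ ^ m / (m.factorial : ℝ)) := by
  obtain ⟨n, rfl⟩ : ∃ n, N = n + 1 := ⟨N - 1, by omega⟩
  simp only [Nat.add_sub_cancel]
  -- abbreviations
  have hSS1 : (∑ m ∈ Finset.range (n + 1 + 1), ρ ^ m / (m.factorial : ℝ)) = SS ρ (n+1) := rfl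
  have hSS0 : (∑ m ∈ Finset.range (n + 1), ρ ^ m / (m.factorial : ℝ)) = SS ρ n := rfl
  rw [hSS1, hSS0]
  set d : ℕ → ℝ := fun j => (n.choose j : ℝ) * (-τ)^j * ((-1:ℝ)^(n-j) * ((n-j).factorial : ℝ))
    with hd
  -- pointwise rewrite of the integrand
  have hiter : ∀ q ∈ Set.Ioi (0:ℝ),
      (q + ρ) ^ (n+1) * Real.exp (-q) *
          iteratedDeriv n (fun w => Real.exp (-(w * τ)) * (1 + w * (1 - τ)) / (q + w)) ρ
      = Real.exp (-(ρ*τ)) * ((1-τ)*(-τ)^n * ((q+ρ)^(n+1) * Real.exp (-q))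
          + ∑ j ∈ Finset.range (n+1), d j *
             ((1+ρ*(1-τ)) * ((q+ρ)^j * Real.exp (-q))
              - (1-τ) * ((q+ρ)^(j+1) * Real.exp (-q)))) := by
    intro q hq
    have hq0 : (0:ℝ) < q := hq
    have hpos : (0:ℝ) < q + ρ := by linarith
    have hne : q + ρ ≠ 0 := ne_of_gt hpos
    rw [iter_eq q τ n (show ρ ∈ {w : ℝ | q + w ≠ 0} from hne), DD, AD,
      Finset.Nat.sum_antidiagonal_eq_sum_range_succ_mk]
    have hsum : ∑ j ∈ Finset.range (n+1), ((j + (n-j)).choose j : ℝ) *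
          ((-τ)^j * ((-1:ℝ)^(n-j) * ((n-j).factorial : ℝ) * (q+ρ)^(-((n-j:ℕ):ℤ)-1)))
        = (∑ j ∈ Finset.range (n+1), d j * (q+ρ)^j) / (q+ρ)^(n+1) := by
      rw [eq_div_iff (pow_ne_zero _ hne), Finset.sum_mul]
      refine Finset.sum_congr rfl fun j hj => ?_
      have hj' : j ≤ n := Nat.lt_succ_iff.mp (Finset.mem_range.mp hj)
      rw [Nat.add_sub_cancel' hj']
      have hz : (q+ρ)^(-((n-j:ℕ):ℤ)-1) * (q+ρ)^(n+1) = (q+ρ)^j := by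
        rw [← zpow_natCast (q+ρ) (n+1), ← zpow_add₀ hne, ← zpow_natCast (q+ρ) j]
        congr 1
        have : ((n-j:ℕ):ℤ) = (n:ℤ) - (j:ℤ) := by
          push_cast [Nat.cast_sub hj']; ring
        rw [this]
        push_cast
        ring
      rw [hd]
      linear_combination ((n.choose j:ℝ) * (-τ)^j * ((-1:ℝ)^(n-j) * ((n-j).factorial:ℝ))) * hz
    rw [hsum]
    have hsplit : ∑ j ∈ Finset.range (n+1), d j *
          ((1+ρ*(1-τ)) * ((q+ρ)^j * Real.exp (-q))
           - (1-τ) * ((q+ρ)^(j+1) * Real.exp (-q)))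
        = (1 - q*(1-τ)) * (∑ j ∈ Finset.range (n+1), d j * (q+ρ)^j) * Real.exp (-q) := by
      rw [Finset.mul_sum, Finset.sum_mul]
      refine Finset.sum_congr rfl fun j hj => ?_
      ring
    rw [hsplit]
    field_simp
  rw [MeasureTheory.setIntegral_congr_fun measurableSet_Ioi hiter]
  rw [MeasureTheory.integral_const_mul]
  have hG : ∀ j ∈ Finset.range (n+1), IntegrableOn (fun q : ℝ => d j *
      ((1+ρ*(1-τ)) * ((q+ρ)^j * Real.exp (-q))
       - (1-τ) * ((q+ρ)^(j+1) * Real.exp (-q)))) (Set.Ioi 0) := fun j _ =>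
    (((polyIntOn ρ j).const_mul _).sub ((polyIntOn ρ (j+1)).const_mul _)).const_mul _
  rw [MeasureTheory.integral_add ((polyIntOn ρ (n+1)).const_mul _)
      (integrable_finset_sum _ hG)]
  rw [MeasureTheory.integral_finset_sum _ hG]
  rw [MeasureTheory.integral_const_mul, polyValS]
  have hterm : ∀ j ∈ Finset.range (n+1),
      ∫ q in Set.Ioi (0:ℝ), d j * ((1+ρ*(1-τ)) * ((q+ρ)^j * Real.exp (-q))
        - (1-τ) * ((q+ρ)^(j+1) * Real.exp (-q)))
      = d j * ((1+ρ*(1-τ)) * ((j.factorial:ℝ) * SS ρ j)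
          - (1-τ) * (((j+1).factorial:ℝ) * SS ρ (j+1))) := by
    intro j _
    rw [MeasureTheory.integral_const_mul,
      MeasureTheory.integral_sub ((polyIntOn ρ j).const_mul _) ((polyIntOn ρ (j+1)).const_mul _),
      MeasureTheory.integral_const_mul, MeasureTheory.integral_const_mul, polyValS, polyValS]
  rw [Finset.sum_congr rfl hterm]
  -- now pure algebra
  have hexpne : Real.exp (-(ρ*τ)) ≠ 0 := Real.exp_ne_zero _
  have hre : ((-1:ℝ)^n / ((n.factorial:ℝ))) * (Real.exp (-(ρ*τ)) * ((1-τ)*(-τ)^n *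
        ((((n+1).factorial:ℝ)) * SS ρ (n+1)) + ∑ j ∈ Finset.range (n+1), d j *
        ((1+ρ*(1-τ)) * ((j.factorial:ℝ) * SS ρ j)
          - (1-τ) * (((j+1).factorial:ℝ) * SS ρ (j+1)))))
      = Real.exp (-(ρ*τ)) * (((-1:ℝ)^n / ((n.factorial:ℝ))) * ((1-τ)*(-τ)^n *
        ((((n+1).factorial:ℝ)) * SS ρ (n+1))) + ((-1:ℝ)^n / ((n.factorial:ℝ))) *
        ∑ j ∈ Finset.range (n+1), d j *
        ((1+ρ*(1-τ)) * ((j.factorial:ℝ) * SS ρ j)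
          - (1-τ) * (((j+1).factorial:ℝ) * SS ρ (j+1)))) := by ring
  rw [hre]
  -- first summand
  have hfn : (n.factorial : ℝ) ≠ 0 := Nat.cast_ne_zero.mpr (Nat.factorial_ne_zero _)
  have h1 : ((-1:ℝ)^n / ((n.factorial:ℝ))) * ((1-τ)*(-τ)^n *
        ((((n+1).factorial:ℝ)) * SS ρ (n+1)))
      = (1-τ)*τ^n*((n:ℝ)+1)*SS ρ (n+1) := by
    rw [Nat.factorial_succ]
    have hneg : (-τ:ℝ)^n = (-1:ℝ)^n * τ^n := by rw [neg_pow]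
    have hsq : ((-1:ℝ)^n) * ((-1:ℝ)^n) = 1 := by
      rw [← pow_add]; simp [pow_mul']
    push_cast
    field_simp [hneg]
    rw [hneg]
    linear_combination ((1-τ)*τ^n*SS ρ (n+1)) * hsq
  have h2 : ((-1:ℝ)^n / ((n.factorial:ℝ))) *
      ∑ j ∈ Finset.range (n+1), d j * ((1+ρ*(1-τ)) * ((j.factorial:ℝ) * SS ρ j)
          - (1-τ) * (((j+1).factorial:ℝ) * SS ρ (j+1)))
      = ∑ j ∈ Finset.range (n+1), τ^j*((1+ρ*(1-τ))*SS ρ j - (1-τ)*((j:ℝ)+1)*SS ρ (j+1)) := by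
    rw [Finset.mul_sum]
    refine Finset.sum_congr rfl fun j hj => ?_
    have hj' : j ≤ n := Nat.lt_succ_iff.mp (Finset.mem_range.mp hj)
    have hfacs : ((n.choose j : ℕ) : ℝ) * (j.factorial:ℝ) * ((n-j).factorial:ℝ)
        = (n.factorial:ℝ) := by
      exact_mod_cast congrArg (Nat.cast (R := ℝ)) (Nat.choose_mul_factorial_mul_factorial hj')
    have hsgn : (-1:ℝ)^n * ((-1:ℝ)^(n-j) * (-1:ℝ)^j) = 1 := by
      rw [← pow_add, ← pow_add]
      have : n + (n - j + j) = 2*n := by omega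
      rw [this]
      simp [pow_mul]
    have hneg : (-τ:ℝ)^j = (-1:ℝ)^j * τ^j := by rw [neg_pow]
    have hfj : (j.factorial : ℝ) ≠ 0 := Nat.cast_ne_zero.mpr (Nat.factorial_ne_zero _)
    have hc : ((-1:ℝ)^n / (n.factorial:ℝ)) * ((n.choose j : ℝ) * (-τ)^j *
        ((-1:ℝ)^(n-j) * ((n-j).factorial:ℝ))) = τ^j / (j.factorial:ℝ) := by
      rw [hneg]
      field_simp
      linear_combination (τ^j * ((n.choose j:ℝ) * (j.factorial:ℝ) * ((n-j).factorial:ℝ))) * hsgn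
        + τ^j * hfacs
    calc ((-1:ℝ)^n / ((n.factorial:ℝ))) * (d j * ((1+ρ*(1-τ)) * ((j.factorial:ℝ) * SS ρ j)
          - (1-τ) * (((j+1).factorial:ℝ) * SS ρ (j+1))))
        = (((-1:ℝ)^n / (n.factorial:ℝ)) * ((n.choose j : ℝ) * (-τ)^j *
            ((-1:ℝ)^(n-j) * ((n-j).factorial:ℝ)))) * ((1+ρ*(1-τ)) * ((j.factorial:ℝ) * SS ρ j)
          - (1-τ) * (((j+1).factorial:ℝ) * SS ρ (j+1))) := by simp only [hd]; ring
      _ = (τ^j / (j.factorial:ℝ)) * ((1+ρ*(1-τ)) * ((j.factorial:ℝ) * SS ρ j)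
          - (1-τ) * (((j+1).factorial:ℝ) * SS ρ (j+1))) := by rw [hc]
      _ = τ^j*((1+ρ*(1-τ))*SS ρ j - (1-τ)*((j:ℝ)+1)*SS ρ (j+1)) := by
          rw [Nat.factorial_succ]
          push_cast
          field_simp
  rw [h1, h2, keyid]
  push_cast
  ring
end

section
/- Let a, b > 0 be reals and L ≥ 0 an integer. Then (b/a)^{2L} · ∫₀¹ J₀(b√τ) · ( J₀(a√τ) − ∑_{k=0}^{L−1} (1−τ)^k · ((a/2)^k/k!) · J_k(a) ) dτ = (b/a)^{L} · ∫₀¹ J_L(a√τ) · J_L(b√τ) dτ. (This is Proposition 9 of the paper.) -/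
open MeasureTheory Finset Matrix

/-! Writing `J_k(x√τ) = ∑ₘ cₘ(x) τ^(m + k/2)` and integrating termwise reduces everything to Beta
integrals. This gives Sonine's formula `b^(k+1) ∫₀¹ J₀(b√τ)(1-τ)^k dτ = 2^(k+1) k! J_{k+1}(b)` and,
for `I_L = ∫₀¹ J_L(a√τ) J_L(b√τ) dτ`, the recurrence `a I_{L+1} = b I_L - 2 J_L(a) J_{L+1}(b)`.
By Sonine the `L`-th subtracted term of the left-hand side is exactly the boundary term of the
recurrence, so both sides satisfy the same recursion in `L` and agree at `L = 0`. -/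

open intervalIntegral

noncomputable def besselJTerm (k : ℕ) (x : ℝ) (m : ℕ) : ℝ :=
  (-1 : ℝ) ^ m * (x / 2) ^ (2 * m + k) / ((m.factorial : ℝ) * ((m + k).factorial : ℝ))

theorem besselJ_eq_tsum (k : ℕ) (x : ℝ) : besselJ k x = ∑' m, besselJTerm k x m := rfl

theorem norm_besselJTerm_le (k : ℕ) (x : ℝ) (m : ℕ) :
    ‖besselJTerm k x m‖ ≤ |x / 2| ^ k * (|x / 2| ^ 2) ^ m / m.factorial := by
  have hfac : (m.factorial : ℝ) ≤ m.factorial * (m + k).factorial :=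
    le_mul_of_one_le_right (by positivity) (by exact_mod_cast (m + k).factorial_pos)
  rw [besselJTerm, norm_div, norm_mul, norm_pow, norm_pow, norm_neg, norm_one, one_pow, one_mul,
    Real.norm_eq_abs, ← pow_mul, ← pow_add, add_comm k, Real.norm_of_nonneg (by positivity)]
  exact div_le_div_of_nonneg_left (by positivity) (by positivity) hfac

theorem summable_norm_besselJTerm (k : ℕ) (x : ℝ) : Summable fun m => ‖besselJTerm k x m‖ :=
  .of_nonneg_of_le (fun _ => norm_nonneg _) (norm_besselJTerm_le k x)
    (by simpa only [mul_div_assoc] using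
      (Real.summable_pow_div_factorial (|x / 2| ^ 2)).mul_left (|x / 2| ^ k))

theorem besselJTerm_mul (k : ℕ) (x t : ℝ) (m : ℕ) :
    besselJTerm k (x * t) m = besselJTerm k x m * t ^ (2 * m + k) := by
  rw [besselJTerm, besselJTerm, mul_div_right_comm x, mul_pow]
  ring

theorem besselJTerm_succ_index (k : ℕ) (x : ℝ) (m : ℕ) :
    besselJTerm (k + 1) x m = x / 2 / (m + k + 1) * besselJTerm k x m := by
  rw [besselJTerm, besselJTerm, ← add_assoc, ← add_assoc, Nat.factorial_succ, pow_succ]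
  push_cast
  field_simp

theorem besselJTerm_succ (k : ℕ) (x : ℝ) (m : ℕ) :
    besselJTerm k x (m + 1) = -(x / 2) / (m + 1) * besselJTerm (k + 1) x m := by
  rw [besselJTerm, besselJTerm, Nat.factorial_succ, show m + 1 + k = m + (k + 1) by ring,
    show 2 * (m + 1) + k = 2 * m + (k + 1) + 1 by ring, pow_succ, pow_succ]
  push_cast
  field_simp

theorem besselJ_mul (k : ℕ) (x t : ℝ) :
    besselJ k (x * t) = ∑' m, besselJTerm k x m * t ^ (2 * m + k) := by
  simp only [besselJ_eq_tsum, besselJTerm_mul]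

theorem continuousOn_besselJ_mul_sqrt (k : ℕ) (x : ℝ) :
    ContinuousOn (fun τ => besselJ k (x * Real.sqrt τ)) (Set.Icc 0 1) := by
  simp only [besselJ_mul]
  refine continuousOn_tsum (fun m => by fun_prop) (summable_norm_besselJTerm k x) ?_
  intro m τ hτ
  have hs : ‖Real.sqrt τ‖ ≤ 1 := by
    rw [Real.norm_of_nonneg (Real.sqrt_nonneg τ)]
    exact Real.sqrt_le_one.mpr hτ.2
  rw [norm_mul, norm_pow]
  exact mul_le_of_le_one_right (norm_nonneg _) (pow_le_one₀ (norm_nonneg _) hs)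

theorem integral_pow_mul_one_sub_pow (n k : ℕ) :
    ∫ τ in (0 : ℝ)..1, τ ^ n * (1 - τ) ^ k = n.factorial * k.factorial / (n + k + 1).factorial := by
  induction k generalizing n with
  | zero =>
    simp only [pow_zero, mul_one, integral_pow, add_zero, Nat.factorial_succ]
    push_cast
    field_simp
    simp
  | succ k ih =>
    have hsplit : ∀ τ : ℝ,
        τ ^ n * (1 - τ) ^ (k + 1) = τ ^ n * (1 - τ) ^ k - τ ^ (n + 1) * (1 - τ) ^ k :=
      fun τ => by ring
    rw [integral_congr fun τ _ => hsplit τ,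
      intervalIntegral.integral_sub (by apply Continuous.intervalIntegrable; fun_prop)
        (by apply Continuous.intervalIntegrable; fun_prop), ih, ih,
      show n + 1 + k + 1 = n + k + 1 + 1 by ring, show n + (k + 1) + 1 = n + k + 1 + 1 by ring,
      Nat.factorial_succ (n + k + 1), Nat.factorial_succ k, Nat.factorial_succ n]
    push_cast
    field_simp
    ring

theorem intervalIntegral_tsum_mul {ι : Type*} [Countable ι] {C : ι → ℝ} {g : ι → ℝ → ℝ}
    {a b : ℝ} (hab : a ≤ b) (hC : Summable fun i => ‖C i‖)
    (hg : ∀ i, ContinuousOn (g i) (Set.Icc a b)) (hg1 : ∀ i, ∀ τ ∈ Set.Icc a b, ‖g i τ‖ ≤ 1) :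
    ∫ τ in a..b, ∑' i, C i * g i τ = ∑' i, C i * ∫ τ in a..b, g i τ := by
  have hint : ∀ i, IntegrableOn (fun τ => C i * g i τ) (Set.Ioc a b) := fun i =>
    (((hg i).const_smul (C i)).integrableOn_Icc).mono_set Set.Ioc_subset_Icc_self
  have hnorm : ∀ i, ∫ τ in Set.Ioc a b, ‖C i * g i τ‖ ≤ ‖C i‖ * (b - a) := fun i => calc
    _ ≤ ∫ _ in Set.Ioc a b, ‖C i‖ := by
      refine setIntegral_mono_on (hint i).norm (integrableOn_const (by simp) (by simp))
        measurableSet_Ioc fun τ hτ => ?_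
      rw [norm_mul]
      exact mul_le_of_le_one_right (norm_nonneg _) (hg1 i τ (Set.Ioc_subset_Icc_self hτ))
    _ = ‖C i‖ * (b - a) := by simp [hab, mul_comm]
  rw [integral_of_le hab, ← integral_tsum_of_summable_integral_norm hint
    ((hC.mul_right (b - a)).of_nonneg_of_le (fun i => integral_nonneg fun _ => norm_nonneg _) hnorm)]
  simp only [MeasureTheory.integral_const_mul, integral_of_le hab]

theorem norm_pow_mul_one_sub_pow_le_one (p q : ℕ) {τ : ℝ} (hτ : τ ∈ Set.Icc (0 : ℝ) 1) :
    ‖τ ^ p * (1 - τ) ^ q‖ ≤ 1 := by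
  obtain ⟨h0, h1⟩ := hτ
  have h1' : 0 ≤ 1 - τ := sub_nonneg.mpr h1
  rw [Real.norm_of_nonneg (by positivity)]
  exact mul_le_one₀ (pow_le_one₀ h0 h1) (by positivity) (pow_le_one₀ h1' (by linarith))

theorem integral_besselJ_sqrt_mul_besselJ_sqrt (k : ℕ) (a b : ℝ) :
    ∫ τ in (0 : ℝ)..1, besselJ k (a * Real.sqrt τ) * besselJ k (b * Real.sqrt τ) =
      ∑' p : ℕ × ℕ, besselJTerm k a p.1 * besselJTerm k b p.2 / (p.1 + p.2 + k + 1) := by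
  have hseries : ∀ τ ∈ Set.uIcc (0 : ℝ) 1,
      besselJ k (a * Real.sqrt τ) * besselJ k (b * Real.sqrt τ) =
        ∑' p : ℕ × ℕ, besselJTerm k a p.1 * besselJTerm k b p.2 * τ ^ (p.1 + p.2 + k) := by
    intro τ hτ
    rw [besselJ_eq_tsum, besselJ_eq_tsum, tsum_mul_tsum_of_summable_norm
      (summable_norm_besselJTerm k _) (summable_norm_besselJTerm k _)]
    refine tsum_congr fun p => ?_
    rw [besselJTerm_mul, besselJTerm_mul, mul_mul_mul_comm, ← pow_add,
      show 2 * p.1 + k + (2 * p.2 + k) = 2 * (p.1 + p.2 + k) by ring, pow_mul,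
      Real.sq_sqrt (by simpa using hτ.1)]
  rw [integral_congr hseries, intervalIntegral_tsum_mul zero_le_one
    ((summable_norm_besselJTerm k a).mul_norm (summable_norm_besselJTerm k b))
    (fun p => by fun_prop) (fun p τ hτ => by simpa using norm_pow_mul_one_sub_pow_le_one _ 0 hτ)]
  refine tsum_congr fun p => ?_
  simp only [integral_pow]
  norm_num
  ring

theorem pow_mul_integral_besselJ_zero_sqrt_mul_one_sub_pow (k : ℕ) (b : ℝ) :
    b ^ (k + 1) * ∫ τ in (0 : ℝ)..1, besselJ 0 (b * Real.sqrt τ) * (1 - τ) ^ k =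
      2 ^ (k + 1) * k.factorial * besselJ (k + 1) b := by
  have hseries : ∀ τ ∈ Set.uIcc (0 : ℝ) 1, besselJ 0 (b * Real.sqrt τ) * (1 - τ) ^ k =
      ∑' n, besselJTerm 0 b n * (τ ^ n * (1 - τ) ^ k) := by
    intro τ hτ
    rw [besselJ_mul, ← tsum_mul_right]
    refine tsum_congr fun n => ?_
    rw [add_zero, pow_mul, Real.sq_sqrt (by simpa using hτ.1), mul_assoc]
  rw [integral_congr hseries, intervalIntegral_tsum_mul zero_le_one (summable_norm_besselJTerm 0 b)
    (fun n => by fun_prop) (fun n τ hτ => norm_pow_mul_one_sub_pow_le_one _ _ hτ),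
    besselJ_eq_tsum, ← tsum_mul_left, ← tsum_mul_left]
  refine tsum_congr fun n => ?_
  rw [integral_pow_mul_one_sub_pow, besselJTerm, besselJTerm, show n + k + 1 = n + (k + 1) by ring]
  simp only [div_pow, add_zero]
  field_simp
  ring

theorem mul_integral_besselJ_succ_sqrt_mul_besselJ_succ_sqrt (k : ℕ) (a b : ℝ) :
    a * ∫ τ in (0 : ℝ)..1, besselJ (k + 1) (a * Real.sqrt τ) * besselJ (k + 1) (b * Real.sqrt τ) =
      b * (∫ τ in (0 : ℝ)..1, besselJ k (a * Real.sqrt τ) * besselJ k (b * Real.sqrt τ)) -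
        2 * (besselJ k a * besselJ (k + 1) b) := by
  have hprod : ∀ l, Summable fun p : ℕ × ℕ => ‖besselJTerm k a p.1 * besselJTerm l b p.2‖ :=
    fun l => (summable_norm_besselJTerm k a).mul_norm (summable_norm_besselJTerm l b)
  have hdiv : Summable fun p : ℕ × ℕ =>
      besselJTerm k a p.1 * besselJTerm k b p.2 / (p.1 + p.2 + k + 1) := by
    refine Summable.of_norm_bounded (hprod k) fun p => ?_
    rw [norm_div, Real.norm_of_nonneg (by positivity : (0 : ℝ) ≤ p.1 + p.2 + k + 1)]
    exact div_le_self (norm_nonneg _) (by linarith [show (0 : ℝ) ≤ p.1 + p.2 + k by positivity])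
  rw [integral_besselJ_sqrt_mul_besselJ_sqrt, integral_besselJ_sqrt_mul_besselJ_sqrt,
    besselJ_eq_tsum k a, besselJ_eq_tsum (k + 1) b,
    tsum_mul_tsum_of_summable_norm (summable_norm_besselJTerm k a) (summable_norm_besselJTerm _ b),
    ← tsum_mul_left, ← tsum_mul_left, ← tsum_mul_left,
    ← (hdiv.mul_left b).tsum_sub ((hprod (k + 1)).of_norm.mul_left 2)]
  -- Termwise the right-hand side vanishes at `j = 0` and is `a` times the `(j - 1, n)` term of the
  -- left-hand side otherwise.
  set e : ℕ × ℕ → ℝ := fun p =>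
    b * (besselJTerm k a p.1 * besselJTerm k b p.2 / (p.1 + p.2 + k + 1)) -
      2 * (besselJTerm k a p.1 * besselJTerm (k + 1) b p.2) with he
  have he_zero : ∀ n, e (0, n) = 0 := fun n => by
    simp only [he, besselJTerm_succ_index k b n]
    field_simp
    ring
  have he_succ : ∀ j n, e (j + 1, n) = a * (besselJTerm (k + 1) a j * besselJTerm (k + 1) b n /
      (j + n + ((k + 1 : ℕ) : ℝ) + 1)) := fun j n => by
    simp only [he, besselJTerm_succ k a j, besselJTerm_succ_index k b n]
    push_cast
    field_simp
    ring
  have hsupp : Function.support e ⊆ Set.range fun p : ℕ × ℕ => (p.1 + 1, p.2) := by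
    rintro ⟨_ | j, n⟩ hp
    · exact absurd (he_zero n) hp
    · exact ⟨(j, n), rfl⟩
  have hinj : Function.Injective fun p : ℕ × ℕ => (p.1 + 1, p.2) := fun p q h => by
    simpa [Prod.ext_iff] using h
  rw [← hinj.tsum_eq hsupp]
  exact tsum_congr fun p => (he_succ p.1 p.2).symm

theorem integral_besselJ_zero_sqrt_mul_sub_sum (a b : ℝ) (L : ℕ) :
    ∫ τ in (0 : ℝ)..1, besselJ 0 (b * Real.sqrt τ) * (besselJ 0 (a * Real.sqrt τ) -
        ∑ k ∈ Finset.range L, (1 - τ) ^ k * ((a / 2) ^ k / (k.factorial : ℝ)) * besselJ k a) =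
      (∫ τ in (0 : ℝ)..1, besselJ 0 (a * Real.sqrt τ) * besselJ 0 (b * Real.sqrt τ)) -
        ∑ k ∈ Finset.range L, (a / 2) ^ k / (k.factorial : ℝ) * besselJ k a *
          ∫ τ in (0 : ℝ)..1, besselJ 0 (b * Real.sqrt τ) * (1 - τ) ^ k := by
  have hJ : ∀ x, ContinuousOn (fun τ => besselJ 0 (x * Real.sqrt τ)) (Set.uIcc 0 1) := fun x => by
    simpa only [Set.uIcc_of_le zero_le_one] using continuousOn_besselJ_mul_sqrt 0 x
  simp_rw [← intervalIntegral.integral_const_mul]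
  rw [← intervalIntegral.integral_finsetSum, ← intervalIntegral.integral_sub]
  · refine integral_congr fun τ _ => ?_
    rw [mul_sub, Finset.mul_sum, mul_comm (besselJ 0 _)]
    congr 1
    exact Finset.sum_congr rfl fun k _ => by ring
  · exact ((hJ a).mul (hJ b)).intervalIntegrable
  · exact (continuousOn_finsetSum _ fun k _ =>
      continuousOn_const.mul ((hJ b).mul (by fun_prop))).intervalIntegrable
  · exact fun k _ => (continuousOn_const.mul ((hJ b).mul (by fun_prop))).intervalIntegrable

theorem div_pow_mul_integral_besselJ_succ_sqrt_mul_besselJ_succ_sqrt (a b : ℝ) (ha : a ≠ 0)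
    (L : ℕ) :
    (b / a) ^ (L + 1) *
        ∫ τ in (0 : ℝ)..1, besselJ (L + 1) (a * Real.sqrt τ) * besselJ (L + 1) (b * Real.sqrt τ) =
      (b / a) ^ 2 * ((b / a) ^ L *
        ∫ τ in (0 : ℝ)..1, besselJ L (a * Real.sqrt τ) * besselJ L (b * Real.sqrt τ)) -
      (b / a) ^ (2 * (L + 1)) * ((a / 2) ^ L / (L.factorial : ℝ) * besselJ L a *
        ∫ τ in (0 : ℝ)..1, besselJ 0 (b * Real.sqrt τ) * (1 - τ) ^ L) := by
  have hrec := mul_integral_besselJ_succ_sqrt_mul_besselJ_succ_sqrt L a b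
  have hsonine := pow_mul_integral_besselJ_zero_sqrt_mul_one_sub_pow L b
  set I := ∫ τ in (0 : ℝ)..1, besselJ L (a * Real.sqrt τ) * besselJ L (b * Real.sqrt τ)
  set I' := ∫ τ in (0 : ℝ)..1, besselJ (L + 1) (a * Real.sqrt τ) * besselJ (L + 1) (b * Real.sqrt τ)
  set S := ∫ τ in (0 : ℝ)..1, besselJ 0 (b * Real.sqrt τ) * (1 - τ) ^ L
  simp only [div_pow]
  field_simp
  linear_combination b ^ (L + 1) * a ^ (L + 1) * a ^ (2 * (L + 1)) * 2 ^ L * L.factorial * hrec +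
    a ^ (L + 1) * a ^ 2 * (a ^ L) ^ 2 * b ^ (L + 1) * besselJ L a * hsonine

theorem statement12_general (a b : ℝ) (ha : 0 < a) (L : ℕ) :
    (b / a) ^ (2 * L) *
        ∫ τ in (0 : ℝ)..1,
          besselJ 0 (b * Real.sqrt τ) *
            (besselJ 0 (a * Real.sqrt τ) -
              ∑ k ∈ Finset.range L,
                (1 - τ) ^ k * ((a / 2) ^ k / (k.factorial : ℝ)) * besselJ k a) =
      (b / a) ^ L *
        ∫ τ in (0 : ℝ)..1, besselJ L (a * Real.sqrt τ) * besselJ L (b * Real.sqrt τ) := by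
  rw [integral_besselJ_zero_sqrt_mul_sub_sum]
  induction L with
  | zero => simp
  | succ L ih =>
    rw [div_pow_mul_integral_besselJ_succ_sqrt_mul_besselJ_succ_sqrt a b ha.ne', ← ih,
      Finset.sum_range_succ]
    ring

theorem statement12 (a b : ℝ) (ha : 0 < a) (hb : 0 < b) (L : ℕ) :
    (b / a) ^ (2 * L) *
        ∫ τ in (0 : ℝ)..1,
          besselJ 0 (b * Real.sqrt τ) *
            (besselJ 0 (a * Real.sqrt τ) -
              ∑ k ∈ Finset.range L,
                (1 - τ) ^ k * ((a / 2) ^ k / (k.factorial : ℝ)) * besselJ k a) =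
      (b / a) ^ L *
        ∫ τ in (0 : ℝ)..1, besselJ L (a * Real.sqrt τ) * besselJ L (b * Real.sqrt τ) :=
  statement12_general a b ha L
end

section
/- Let N ≥ 1 be an integer and ω₁,…,ω_N pairwise distinct reals. Let G be the N×N real matrix with entries G_{i,j} = (i−1)! · e^{ω_j} · L_{i−1}(−ω_j), 1 ≤ i,j ≤ N. Then G is invertible, and for every index i with 1 ≤ i ≤ N and every real u, ∑_{j=1}^N (j−1)! · L_{j−1}(u) · (G^{−1})_{i,j} = e^{−ω_i} · ∏_{τ≠i} ((−u−ω_τ)/(ω_i−ω_τ)). (This is the polynomial identity characterizing the inverse moment matrix in the case L = 0.) -/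
open MeasureTheory Finset Matrix

/-!
The polynomials `P_n(y) = n! L_n(-y)` are monic of degree `n`, and `G_{ij} = P_i(ω_j) e^{ω_j}`.
Hence `det G` is the Vandermonde determinant of `ω` times `∏ e^{ω_j}`, which is nonzero.
For the identity, put `c_t = e^{-ω_t} ℓ_t(-u)` with `ℓ_t` the Lagrange basis at the nodes `ω`:
since `deg P_j < N`, Lagrange interpolation gives `(G c)_j = P_j(-u) = j! L_j(u)`, so `c = G⁻¹ b`
with `b_j = j! L_j(u)`, which is the claim read off in coordinate `i`.
-/

open Polynomial

theorem Lagrange.eval_eq_sum_eval_mul_prod_div {F ι : Type*} [Field F] [DecidableEq ι] {s : Finset ι}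
    {v : ι → F} (hvs : Set.InjOn v s) {f : F[X]} (hf : f.degree < s.card) (x : F) :
    f.eval x = ∑ i ∈ s, f.eval (v i) * ∏ j ∈ s.erase i, (x - v j) / (v i - v j) := by
  conv_lhs => rw [Lagrange.eq_interpolate hvs hf]
  simp only [Lagrange.interpolate_apply, eval_finsetSum, eval_mul, eval_C, Lagrange.basis,
    eval_prod, Lagrange.basisDivisor, eval_C, eval_sub, eval_X]
  refine Finset.sum_congr rfl fun i _ => congrArg _ (Finset.prod_congr rfl fun j _ => ?_)
  ring

noncomputable def factorialLaguerreNeg (n : ℕ) : ℝ[X] :=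
  ∑ k ∈ range (n + 1), C (n.choose k * n.factorial / k.factorial : ℝ) * X ^ k

theorem eval_factorialLaguerreNeg (n : ℕ) (y : ℝ) :
    (factorialLaguerreNeg n).eval y = n.factorial * laguerre n (-y) := by
  simp only [factorialLaguerreNeg, laguerre, eval_finsetSum, eval_mul, eval_C, eval_pow, eval_X,
    neg_neg, Finset.mul_sum]
  exact Finset.sum_congr rfl fun k _ => by ring

theorem factorialLaguerreNeg_eq_X_pow_add (n : ℕ) :
    factorialLaguerreNeg n =
      X ^ n + ∑ k ∈ range n, C (n.choose k * n.factorial / k.factorial : ℝ) * X ^ k := by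
  rw [factorialLaguerreNeg, sum_range_succ, add_comm, Nat.choose_self, Nat.cast_one, one_mul,
    div_self (by positivity), C_1, one_mul]

theorem degree_sum_C_mul_X_pow_lt {R : Type*} [Semiring R] (n : ℕ) (a : ℕ → R) :
    (∑ k ∈ range n, C (a k) * X ^ k).degree < (n : WithBot ℕ) :=
  mem_degreeLT.mp <| Submodule.sum_mem _ fun k hk =>
    mem_degreeLT.mpr <| (degree_C_mul_X_pow_le _ _).trans_lt <| by
      exact_mod_cast Finset.mem_range.mp hk

theorem monic_factorialLaguerreNeg (n : ℕ) : (factorialLaguerreNeg n).Monic := by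
  rw [factorialLaguerreNeg_eq_X_pow_add]
  exact monic_X_pow_add (degree_sum_C_mul_X_pow_lt _ _)

theorem natDegree_factorialLaguerreNeg (n : ℕ) : (factorialLaguerreNeg n).natDegree = n := by
  rw [factorialLaguerreNeg_eq_X_pow_add, natDegree_add_eq_left_of_degree_lt, natDegree_X_pow]
  rw [degree_X_pow]
  exact degree_sum_C_mul_X_pow_lt _ _

theorem Gmat_apply (N : ℕ) (ω : Fin N → ℝ) (i j : Fin N) :
    Gmat N ω i j = (factorialLaguerreNeg i).eval (ω j) * Real.exp (ω j) := by
  rw [Gmat, of_apply, eval_factorialLaguerreNeg]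
  ring

theorem det_Gmat (N : ℕ) (ω : Fin N → ℝ) :
    (Gmat N ω).det = (vandermonde ω).det * ∏ j, Real.exp (ω j) := by
  have hG : Gmat N ω = (of fun i j : Fin N => (factorialLaguerreNeg i).eval (ω j)) *
      diagonal fun j => Real.exp (ω j) := by
    ext i j
    rw [mul_diagonal, of_apply, Gmat_apply]
  rw [hG, det_mul, det_diagonal, ← det_transpose,
    det_eval_matrixOfPolynomials_eq_det_vandermonde ω _ (fun i => natDegree_factorialLaguerreNeg i)
      (fun i => monic_factorialLaguerreNeg i)]
  rfl

theorem isUnit_det_Gmat {N : ℕ} {ω : Fin N → ℝ} (hω : Function.Injective ω) :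
    IsUnit (Gmat N ω).det := by
  rw [isUnit_iff_ne_zero, det_Gmat]
  exact mul_ne_zero (det_vandermonde_ne_zero_iff.mpr hω) (by positivity)

theorem Gmat_mulVec_lagrange {N : ℕ} {ω : Fin N → ℝ} (hω : Function.Injective ω) (u : ℝ) :
    Gmat N ω *ᵥ (fun i => Real.exp (-ω i) * ∏ τ ∈ univ.erase i, (-u - ω τ) / (ω i - ω τ)) =
      fun j : Fin N => ((j : ℕ).factorial : ℝ) * laguerre (j : ℕ) u := by
  funext j
  have hdeg : (factorialLaguerreNeg j).degree < (univ : Finset (Fin N)).card := by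
    rw [degree_eq_natDegree (monic_factorialLaguerreNeg j).ne_zero, natDegree_factorialLaguerreNeg,
      card_univ, Fintype.card_fin]
    exact_mod_cast j.2
  have h := Lagrange.eval_eq_sum_eval_mul_prod_div (Set.injOn_of_injective hω) hdeg (-u)
  rw [eval_factorialLaguerreNeg, neg_neg] at h
  rw [h, mulVec, dotProduct]
  refine Finset.sum_congr rfl fun i _ => ?_
  rw [Gmat_apply, Real.exp_neg]
  field_simp

theorem statement15_general (N : ℕ) (ω : Fin N → ℝ) (hdist : Function.Injective ω) :
    IsUnit (Gmat N ω).det ∧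
      ∀ (i : Fin N) (u : ℝ),
        (∑ j : Fin N, ((j : ℕ).factorial : ℝ) * laguerre (j : ℕ) u * (Gmat N ω)⁻¹ i j) =
          Real.exp (-ω i) * ∏ τ ∈ Finset.univ.erase i, ((-u - ω τ) / (ω i - ω τ)) := by
  have hG := isUnit_det_Gmat hdist
  refine ⟨hG, fun i u => ?_⟩
  let := invertibleOfIsUnitDet (Gmat N ω) hG
  have h := congrFun (inv_mulVec_eq_vec (Gmat_mulVec_lagrange hdist u).symm) i
  simpa only [mulVec, dotProduct, mul_comm] using h

theorem statement15 (N : ℕ) (hN : 1 ≤ N) (ω : Fin N → ℝ) (hdist : Function.Injective ω) :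
    IsUnit (Gmat N ω).det ∧
      ∀ (i : Fin N) (u : ℝ),
        (∑ j : Fin N, ((j : ℕ).factorial : ℝ) * laguerre (j : ℕ) u * (Gmat N ω)⁻¹ i j) =
          Real.exp (-ω i) * ∏ τ ∈ Finset.univ.erase i, ((-u - ω τ) / (ω i - ω τ)) :=
  statement15_general N ω hdist
end
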